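/- arXiv:2411.03601 — 12 statements merged into one kernel-verified Lean document; each statement's English description precedes it below -/
import Mathlib

section
/- Let τ : A^ℤ → A^ℤ be a cellular automaton with a unique active transition p ∈ A^S, where S = [k, ℓ] ⊂ ℤ is an integer interval with k ≤ 0 ≤ ℓ, and let μ : A^S → A be its local defining function. Then τ ∘ τ ≠ τ if and only if either there exists t ∈ S with t > 0 such that p(t) = μ(p) and p(i) = p(i−t) for all i ∈ [k+t, ℓ] with i ≠ t, or there exists t ∈ S with t < 0 such that p(t) = μ(p) and p(i) = p(i−t) for all i ∈ [k, ℓ+t] with i ≠ t. -/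
/-!
A configuration `x` with `τ (τ x) 0 ≠ τ x 0` must contain `p` at some `t ∈ S \ {0}` and nowhere
else in `S`, while `τ x` shows `p` at `0`; since `τ` only rewrites the cells where `p` occurs, this
forces `p(t) = μ(p)` and `p(i) = p(i - t)` away from `t`. Conversely, planting `p` at such a `t` on
top of `p` gives a configuration of this kind.

The uniqueness of the occurrence is the heart of the matter. Two occurrences at `u < v` in
`S = [k, ℓ]` make `x` periodic with period `d = v - u` near `S`, so `p` extends to a `d`-periodic
`V : ℤ → A` with `x = V (· - u)` on `[u, v)`. As `τ` only writes the value `b = μ(p)`, the set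
`V⁻¹ {b}` is closed under `+ u`; it contains `u`, hence `d * u`, hence `0`; but `V 0 = p 0 ≠ b`.
-/

open Function

section

variable {A : Type*}

/-- `window S x j` is `(j · x)|_S` in the notation of the statement. -/
def window (S : Finset ℤ) (x : ℤ → A) (j : ℤ) : S → A := fun s => x (s + j)

@[simp]
theorem window_apply (S : Finset ℤ) (x : ℤ → A) (j : ℤ) (s : S) : window S x j s = x (s + j) :=
  rfl

theorem exists_periodic_extension {f : ℤ → A} {d m n : ℤ} (hd : 0 < d)
    (hf : ∀ s, m ≤ s → s ≤ n → f (s + d) = f s) :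
    ∃ V : ℤ → A, Periodic V d ∧ ∀ s, m ≤ s → s ≤ n + d → V s = f s := by
  set V : ℤ → A := fun i => f (m + (i - m) % d)
  have hV : Periodic V d := fun i => by
    simp only [V, show i + d - m = i - m + d by ring, Int.add_emod_right]
  refine ⟨V, hV, fun s hms hsn => ?_⟩
  induction hq : (s - m).toNat using Nat.strong_induction_on generalizing s with
  | _ q ih =>
    by_cases hs : s < m + d
    · have hr : (s - m) % d = s - m := Int.emod_eq_of_lt (by omega) (by omega)
      simp only [V, hr, add_sub_cancel]
    · rw [← hV.sub_eq, ih _ (by omega) (s - d) (by omega) (by omega) rfl,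
        ← hf (s - d) (by omega) (by omega), sub_add_cancel]

/-- The value `b` spreads from `u` to all multiples of `u`, among them `d * u`. -/
theorem Function.Periodic.apply_zero_eq_of_shift_closed {V : ℤ → A} {d u : ℤ} {b : A}
    (hV : Periodic V d) (hd : 0 < d)
    (hclosed : ∀ w, u ≤ w → w < u + d → V (w - u) = b → V w = b) (hu : V u = b) : V 0 = b := by
  have hstep : ∀ i, V i = b → V (i + u) = b := by
    intro i hi
    obtain ⟨n, hn, -⟩ := existsUnique_add_zsmul_mem_Ico hd (i + u) u
    have hw := hclosed _ hn.1 hn.2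
      (by rw [show i + u + n • d - u = i + n • d by ring, hV.zsmul n, hi])
    rwa [hV.zsmul n] at hw
  have hmul : ∀ m : ℕ, V ((m + 1) * u) = b := by
    intro m
    induction m with
    | zero => simpa using hu
    | succ m ih =>
      push_cast
      convert hstep _ ih using 2
      ring
  obtain ⟨m, rfl⟩ : ∃ m : ℕ, d = m + 1 := ⟨(d - 1).toNat, by omega⟩
  rw [← hV.int_mul_eq u, mul_comm]
  exact_mod_cast hmul m

section UniqueActiveTransition

variable {S : Finset ℤ} {p : S → A} {μ : (S → A) → A} {τ : (ℤ → A) → ℤ → A}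

def IsTranslationalSymmetry (p : S → A) (t : ℤ) : Prop :=
  ∀ i (hi : i ∈ S) (hi' : i - t ∈ S), i ≠ t → p ⟨i, hi⟩ = p ⟨i - t, hi'⟩

theorem apply_of_window_eq (hτ : ∀ x j, τ x j = μ (window S x j)) {x : ℤ → A} {j : ℤ}
    (h : window S x j = p) : τ x j = μ p := by
  rw [hτ, h]

theorem apply_of_window_ne {h0 : (0 : ℤ) ∈ S} (hμ : ∀ z : S → A, μ z = z ⟨0, h0⟩ ↔ z ≠ p)
    (hτ : ∀ x j, τ x j = μ (window S x j)) {x : ℤ → A} {j : ℤ} (h : window S x j ≠ p) :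
    τ x j = x j := by
  rw [hτ, (hμ _).mpr h, window_apply, zero_add]

theorem apply_shift (hτ : ∀ x j, τ x j = μ (window S x j)) (x : ℤ → A) (c : ℤ) :
    τ (fun i => x (i + c)) = fun i => τ x (i + c) := by
  funext j
  rw [hτ, hτ]
  congr 1
  funext s
  simp only [window_apply, add_assoc]

theorem exists_apply_apply_zero_ne (hτ : ∀ x j, τ x j = μ (window S x j)) (h : τ ∘ τ ≠ τ) :
    ∃ x, τ (τ x) 0 ≠ τ x 0 := by
  obtain ⟨x, hx⟩ := Function.ne_iff.mp h
  obtain ⟨c, hc⟩ := Function.ne_iff.mp hx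
  exact ⟨fun i => x (i + c), by simpa [apply_shift hτ] using hc⟩

theorem exists_window_eq_of_isTranslationalSymmetry (h0 : (0 : ℤ) ∈ S) {t : ℤ}
    (hsym : IsTranslationalSymmetry p t) :
    ∃ x : ℤ → A, window S x t = p ∧ ∀ i (hi : i ∈ S), i ≠ t → x i = p ⟨i, hi⟩ := by
  classical
  refine ⟨fun i => if h : i - t ∈ S then p ⟨i - t, h⟩
    else if h' : i ∈ S then p ⟨i, h'⟩ else p ⟨0, h0⟩, ?_, fun i hi hit => ?_⟩
  · funext s
    simp
  · by_cases h : i - t ∈ S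
    · simp [h, hsym i hi h hit]
    · simp [h, hi]

theorem apply_apply_zero_ne {h0 : (0 : ℤ) ∈ S} (hμ : ∀ z : S → A, μ z = z ⟨0, h0⟩ ↔ z ≠ p)
    (hτ : ∀ x j, τ x j = μ (window S x j)) {t : ℤ} (ht : t ∈ S) (ht0 : t ≠ 0)
    (hpt : p ⟨t, ht⟩ = μ p) {x : ℤ → A} (hxt : window S x t = p)
    (hx : ∀ i (hi : i ∈ S), i ≠ t → x i = p ⟨i, hi⟩) :
    τ (τ x) 0 ≠ τ x 0 := by
  have hb : μ p ≠ p ⟨0, h0⟩ := fun h => (hμ p).mp h rfl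
  have hno : ∀ j (hj : j ∈ S), j ≠ t → window S x j ≠ p := by
    intro j hj hjt hxj
    apply hb
    calc μ p = p ⟨t, ht⟩ := hpt.symm
      _ = x (t + j) := (congrFun hxj ⟨t, ht⟩).symm
      _ = p ⟨j, hj⟩ := by rw [add_comm]; exact congrFun hxt ⟨j, hj⟩
      _ = x j := (hx j hj hjt).symm
      _ = p ⟨0, h0⟩ := by simpa using congrFun hxj ⟨0, h0⟩
  have himage : window S (τ x) 0 = p := by
    funext ⟨i, hi⟩
    rw [window_apply, add_zero]
    by_cases hit : i = t
    · subst hit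
      rw [apply_of_window_eq hτ hxt, hpt]
    · rw [apply_of_window_ne hμ hτ (hno i hi hit), hx i hi hit]
  rw [apply_of_window_eq hτ himage, apply_of_window_ne hμ hτ (hno 0 h0 ht0.symm),
    hx 0 h0 ht0.symm]
  exact hb

theorem comp_self_ne_of_isTranslationalSymmetry {h0 : (0 : ℤ) ∈ S}
    (hμ : ∀ z : S → A, μ z = z ⟨0, h0⟩ ↔ z ≠ p) (hτ : ∀ x j, τ x j = μ (window S x j))
    {t : ℤ} (ht : t ∈ S) (ht0 : t ≠ 0) (hpt : p ⟨t, ht⟩ = μ p)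
    (hsym : IsTranslationalSymmetry p t) : τ ∘ τ ≠ τ := by
  obtain ⟨x, hxt, hx⟩ := exists_window_eq_of_isTranslationalSymmetry h0 hsym
  exact fun h => apply_apply_zero_ne hμ hτ ht ht0 hpt hxt hx (congrFun (congrFun h x) 0)

end UniqueActiveTransition

section Interval

variable {k ℓ : ℤ} {p : Finset.Icc k ℓ → A} {μ : (Finset.Icc k ℓ → A) → A}
  {τ : (ℤ → A) → ℤ → A}

theorem eq_of_window_eq {h0 : (0 : ℤ) ∈ Finset.Icc k ℓ}
    (hμ : ∀ z : Finset.Icc k ℓ → A, μ z = z ⟨0, h0⟩ ↔ z ≠ p)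
    (hτ : ∀ x j, τ x j = μ (window (Finset.Icc k ℓ) x j)) {x : ℤ → A}
    (hy : window (Finset.Icc k ℓ) (τ x) 0 = p) {u v : ℤ} (hu : u ∈ Finset.Icc k ℓ)
    (hv : v ∈ Finset.Icc k ℓ) (hxu : window (Finset.Icc k ℓ) x u = p)
    (hxv : window (Finset.Icc k ℓ) x v = p) : u = v := by
  wlog huv : u < v generalizing u v
  · rcases (not_lt.mp huv).eq_or_lt with h | h
    exacts [h.symm, (this hv hu hxv hxu h).symm]
  exfalso
  obtain ⟨hk, hℓ⟩ := Finset.mem_Icc.mp h0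
  obtain ⟨hku, -⟩ := Finset.mem_Icc.mp hu
  obtain ⟨-, hvℓ⟩ := Finset.mem_Icc.mp hv
  have hxp : ∀ {w} (hw : w ∈ Finset.Icc k ℓ), x (u + w) = p ⟨w, hw⟩ := fun hw => by
    rw [add_comm]; exact congrFun hxu ⟨_, hw⟩
  have hyp : ∀ {w} (hw : w ∈ Finset.Icc k ℓ), τ x w = p ⟨w, hw⟩ := fun hw => by
    simpa using congrFun hy ⟨_, hw⟩
  have hper : ∀ s, k ≤ s → s ≤ ℓ → x (u + (s + (v - u))) = x (u + s) := by
    intro s h1 h2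
    have hs : s ∈ Finset.Icc k ℓ := Finset.mem_Icc.mpr ⟨h1, h2⟩
    rw [hxp hs, show u + (s + (v - u)) = s + v by ring]
    exact congrFun hxv ⟨s, hs⟩
  obtain ⟨V, hV, hVx⟩ := exists_periodic_extension (f := fun i => x (u + i)) (by omega) hper
  have hVp : ∀ {s} (hs : s ∈ Finset.Icc k ℓ), V s = p ⟨s, hs⟩ := fun hs => by
    have := Finset.mem_Icc.mp hs
    rw [hVx _ (by omega) (by omega), hxp hs]
  have hclosed : ∀ w, u ≤ w → w < u + (v - u) → V (w - u) = μ p → V w = μ p := by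
    intro w h1 h2 hw
    have hwS : w ∈ Finset.Icc k ℓ := Finset.mem_Icc.mpr ⟨by omega, by omega⟩
    rw [hVp hwS, ← hyp hwS]
    by_cases hxw : window (Finset.Icc k ℓ) x w = p
    · exact apply_of_window_eq hτ hxw
    · rw [apply_of_window_ne hμ hτ hxw, ← hw, hVx _ (by omega) (by omega), add_sub_cancel]
  have hV0 := hV.apply_zero_eq_of_shift_closed (by omega) hclosed
    (by rw [hVp hu, ← hyp hu, apply_of_window_eq hτ hxu])
  rw [hVp h0] at hV0
  exact (hμ p).mp hV0.symm rfl

theorem exists_isTranslationalSymmetry_of_apply_apply_ne {h0 : (0 : ℤ) ∈ Finset.Icc k ℓ}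
    (hμ : ∀ z : Finset.Icc k ℓ → A, μ z = z ⟨0, h0⟩ ↔ z ≠ p)
    (hτ : ∀ x j, τ x j = μ (window (Finset.Icc k ℓ) x j)) {x : ℤ → A}
    (hx : τ (τ x) 0 ≠ τ x 0) :
    ∃ t, ∃ ht : t ∈ Finset.Icc k ℓ, t ≠ 0 ∧ p ⟨t, ht⟩ = μ p ∧ IsTranslationalSymmetry p t := by
  have hy : window (Finset.Icc k ℓ) (τ x) 0 = p := by
    by_contra h
    exact hx (apply_of_window_ne hμ hτ h)
  have hyp : ∀ i (hi : i ∈ Finset.Icc k ℓ), τ x i = p ⟨i, hi⟩ := fun i hi => by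
    simpa using congrFun hy ⟨i, hi⟩
  have hx0 : window (Finset.Icc k ℓ) x 0 ≠ p := fun h =>
    (hμ p).mp (by rw [← apply_of_window_eq hτ h, hyp 0 h0]) rfl
  obtain ⟨t, ht, hxt⟩ : ∃ t, ∃ ht : t ∈ Finset.Icc k ℓ, window (Finset.Icc k ℓ) x t = p := by
    by_contra! hnone
    refine hx0 (funext fun ⟨i, hi⟩ => ?_)
    rw [window_apply, add_zero, ← apply_of_window_ne hμ hτ (hnone i hi), hyp i hi]
  refine ⟨t, ht, fun ht0 => hx0 (ht0 ▸ hxt), by rw [← hyp t ht, apply_of_window_eq hτ hxt],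
    fun i hi hi' hit => ?_⟩
  rw [← hyp i hi, apply_of_window_ne hμ hτ fun h => hit (eq_of_window_eq hμ hτ hy hi ht h hxt)]
  simpa using congrFun hxt ⟨i - t, hi'⟩

end Interval

end

theorem not_idempotent_iff_translational_symmetry_general
    {A : Type*}
    (k ℓ : ℤ)
    (S : Finset ℤ) (hS : S = Finset.Icc k ℓ) (h0 : (0 : ℤ) ∈ S)
    (p : S → A) (μ : (S → A) → A)
    (hμ : ∀ z : S → A, μ z = z ⟨0, h0⟩ ↔ z ≠ p)
    (τ : (ℤ → A) → ℤ → A)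
    (hτ : ∀ (x : ℤ → A) (j : ℤ), τ x j = μ (fun s : S => x (s.1 + j))) :
    τ ∘ τ ≠ τ ↔
      ((∃ t, ∃ ht : t ∈ S, 0 < t ∧ p ⟨t, ht⟩ = μ p ∧
          ∀ i, k + t ≤ i → i ≤ ℓ → i ≠ t →
            ∀ (hi : i ∈ S) (hi' : i - t ∈ S), p ⟨i, hi⟩ = p ⟨i - t, hi'⟩) ∨
       (∃ t, ∃ ht : t ∈ S, t < 0 ∧ p ⟨t, ht⟩ = μ p ∧
          ∀ i, k ≤ i → i ≤ ℓ + t → i ≠ t →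
            ∀ (hi : i ∈ S) (hi' : i - t ∈ S), p ⟨i, hi⟩ = p ⟨i - t, hi'⟩)) := by
  subst hS
  constructor
  · intro hne
    obtain ⟨x, hx⟩ := exists_apply_apply_zero_ne hτ hne
    obtain ⟨t, ht, ht0, hpt, hsym⟩ := exists_isTranslationalSymmetry_of_apply_apply_ne hμ hτ hx
    rcases ht0.lt_or_gt with hneg | hpos
    · exact .inr ⟨t, ht, hneg, hpt, fun i _ _ hit hi hi' => hsym i hi hi' hit⟩
    · exact .inl ⟨t, ht, hpos, hpt, fun i _ _ hit hi hi' => hsym i hi hi' hit⟩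
  · rintro (⟨t, ht, ht0, hpt, hsym⟩ | ⟨t, ht, ht0, hpt, hsym⟩) <;>
      refine comp_self_ne_of_isTranslationalSymmetry hμ hτ ht (by omega) hpt
        fun i hi hi' hit => hsym i ?_ ?_ hit hi hi' <;>
      simp only [Finset.mem_Icc] at hi hi' <;> omega

/-- For a CA `τ` with unique active transition `p : S → A`,
where `S = [k, ℓ]` is an integer interval containing `0`, non-idempotence of `τ`
is characterized by the existence of `t ∈ S₊` or `t ∈ S₋` with `p(t) = μ(p)` and
the corresponding translational symmetry of a subpattern of `p`. -/
theorem not_idempotent_iff_translational_symmetry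
    {A : Type*} [Nontrivial A]
    (k ℓ : ℤ) (hk : k ≤ 0) (hℓ : 0 ≤ ℓ)
    (S : Finset ℤ) (hS : S = Finset.Icc k ℓ) (h0 : (0 : ℤ) ∈ S)
    (p : S → A) (μ : (S → A) → A)
    (hμ : ∀ z : S → A, μ z = z ⟨0, h0⟩ ↔ z ≠ p)
    (τ : (ℤ → A) → ℤ → A)
    (hτ : ∀ (x : ℤ → A) (j : ℤ), τ x j = μ (fun s : S => x (s.1 + j))) :
    τ ∘ τ ≠ τ ↔
      ((∃ t, ∃ ht : t ∈ S, 0 < t ∧ p ⟨t, ht⟩ = μ p ∧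
          ∀ i, k + t ≤ i → i ≤ ℓ → i ≠ t →
            ∀ (hi : i ∈ S) (hi' : i - t ∈ S), p ⟨i, hi⟩ = p ⟨i - t, hi'⟩) ∨
       (∃ t, ∃ ht : t ∈ S, t < 0 ∧ p ⟨t, ht⟩ = μ p ∧
          ∀ i, k ≤ i → i ≤ ℓ + t → i ≠ t →
            ∀ (hi : i ∈ S) (hi' : i - t ∈ S), p ⟨i, hi⟩ = p ⟨i - t, hi'⟩)) :=
  not_idempotent_iff_translational_symmetry_general k ℓ S hS h0 p μ hμ τ hτ
end

section
/- Let A be a finite set with at least two distinct elements, and let τ : A^ℤ → A^ℤ be a cellular automaton with a unique active transition p ∈ A^S, where S ⊂ ℤ is an integer interval with 0 ∈ S. Then τ ∘ τ ≠ τ if and only if τ is strictly almost equicontinuous (i.e., the set of equicontinuous points of τ is dense in A^ℤ, but not every point of A^ℤ is an equicontinuous point of τ). -/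
/-!
Extend the pattern to `P : ℤ → A` and let `b ≠ P 0` be the value the active transition writes.
A cell whose value is not `P 0` never changes, so a run of `ℓ - k + 1` such cells is a wall that
no information crosses: configurations equal to `b` far from the origin are equicontinuity points,
and they are dense. If `τ` is idempotent, all iterates `τⁿ = τ` have the same radius, so every
point is equicontinuous. If `τ ∘ τ ≠ τ`, firing the pattern somewhere creates a new occurrence
of it at some offset `s ≠ 0` of the window, with `P s = b`; a second such offset would make the
pattern periodic in a way that carries the value `b` back to `0`, so `P j = P (j + s)` for all
`j ≠ 0`. Then `b` written at the positive multiples of `s` on the `s`-periodic background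
`i ↦ P (i mod s)` is a front that `τ` moves by `-s` at each step; a copy placed arbitrarily far
out eventually reaches the origin, so this fixed background is not an equicontinuity point.
-/

open Classical in
/-- The metric on the full shift `A^ℤ`: `d(x,y) = 0` if `x = y`, and otherwise
`d(x,y) = 2^{-max{k ≥ 0 : x|[-k,k] = y|[-k,k]}}`. -/
noncomputable def shiftDist {A : Type*} (x y : ℤ → A) : ℝ :=
  if x = y then 0
  else (2 : ℝ) ^ (-((sSup {n : ℕ | ∀ i : ℤ, -(n : ℤ) ≤ i → i ≤ (n : ℤ) → x i = y i} : ℕ) : ℤ))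

/-- `x` is an equicontinuous point of `τ`: for all `ε > 0` there is `k ∈ ℤ₊` such
that every `y` agreeing with `x` on `[-k,k]` satisfies `d(τⁿ(y), τⁿ(x)) < ε` for all
`n ≥ 0`. -/
def IsEquicontinuityPoint {A : Type*} (τ : (ℤ → A) → ℤ → A) (x : ℤ → A) : Prop :=
  ∀ ε : ℝ, 0 < ε → ∃ k : ℕ, 0 < k ∧
    ∀ y : ℤ → A, (∀ i : ℤ, -(k : ℤ) ≤ i → i ≤ (k : ℤ) → y i = x i) →
      ∀ n : ℕ, shiftDist (τ^[n] y) (τ^[n] x) < ε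

section Equicontinuity

variable {A : Type*}

lemma shiftDist_le_of_eqOn {u w : ℤ → A} (N : ℕ)
    (h : ∀ i : ℤ, -(N : ℤ) ≤ i → i ≤ N → u i = w i) :
    shiftDist u w ≤ (2 : ℝ) ^ (-(N : ℤ)) := by
  unfold shiftDist
  split_ifs with huw
  · positivity
  · obtain ⟨i₀, hi₀⟩ := Function.ne_iff.mp huw
    have hbdd : BddAbove {n : ℕ | ∀ i : ℤ, -(n : ℤ) ≤ i → i ≤ n → u i = w i} :=
      ⟨i₀.natAbs, fun n hn => not_lt.mp fun hlt => hi₀ (hn i₀ (by omega) (by omega))⟩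
    gcongr
    · norm_num
    · exact le_csSup hbdd h

lemma shiftDist_eq_one_of_apply_zero_ne {u w : ℤ → A} (h : u 0 ≠ w 0) : shiftDist u w = 1 := by
  have hempty : {n : ℕ | ∀ i : ℤ, -(n : ℤ) ≤ i → i ≤ n → u i = w i} = ∅ :=
    Set.eq_empty_of_forall_notMem fun n hn => h (hn 0 (by omega) (by omega))
  rw [shiftDist, if_neg (fun huw => h (congrFun huw 0)), hempty, csSup_empty]
  norm_num

lemma isEquicontinuityPoint_of_forall_eqOn {τ : (ℤ → A) → ℤ → A} {x : ℤ → A}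
    (h : ∀ N : ℕ, ∃ K : ℕ, ∀ y : ℤ → A, (∀ i : ℤ, -(K : ℤ) ≤ i → i ≤ K → y i = x i) →
      ∀ n : ℕ, ∀ i : ℤ, -(N : ℤ) ≤ i → i ≤ N → τ^[n] y i = τ^[n] x i) :
    IsEquicontinuityPoint τ x := by
  intro ε hε
  obtain ⟨N, hN⟩ := exists_pow_lt_of_lt_one hε (by norm_num : (2 : ℝ)⁻¹ < 1)
  obtain ⟨K, hK⟩ := h N
  refine ⟨K + 1, K.succ_pos, fun y hy n => ?_⟩
  calc shiftDist (τ^[n] y) (τ^[n] x)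
      ≤ (2 : ℝ) ^ (-(N : ℤ)) :=
        shiftDist_le_of_eqOn N (hK y (fun i h₁ h₂ => hy i (by omega) (by omega)) n)
    _ < ε := by rwa [zpow_neg, zpow_natCast, ← inv_pow]

lemma IsEquicontinuityPoint.exists_iterate_apply_zero_eq {τ : (ℤ → A) → ℤ → A} {x : ℤ → A}
    (h : IsEquicontinuityPoint τ x) :
    ∃ K : ℕ, ∀ y : ℤ → A, (∀ i : ℤ, -(K : ℤ) ≤ i → i ≤ K → y i = x i) →
      ∀ n : ℕ, τ^[n] y 0 = τ^[n] x 0 := by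
  obtain ⟨K, -, hK⟩ := h 1 one_pos
  exact ⟨K, fun y hy n => by_contra fun hne =>
    (hK y hy n).ne (shiftDist_eq_one_of_apply_zero_ne hne)⟩

end Equicontinuity

namespace UniqueActiveCA

variable {A : Type*}

def Occurs (P : ℤ → A) (k ℓ : ℤ) (x : ℤ → A) (j : ℤ) : Prop :=
  ∀ i, k ≤ i → i ≤ ℓ → x (i + j) = P i

open Classical in
noncomputable def step (P : ℤ → A) (k ℓ : ℤ) (b : A) (x : ℤ → A) (j : ℤ) : A :=
  if Occurs P k ℓ x j then b else x j

section Step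

variable {P : ℤ → A} {k ℓ : ℤ} {b : A} {x y : ℤ → A} {j : ℤ}

lemma step_of_occurs (h : Occurs P k ℓ x j) : step P k ℓ b x j = b := by
  simp [step, h]

lemma step_of_not_occurs (h : ¬ Occurs P k ℓ x j) : step P k ℓ b x j = x j := by
  simp [step, h]

lemma Occurs.apply_eq (h : Occurs P k ℓ x j) (hk : k ≤ 0) (hℓ : 0 ≤ ℓ) : x j = P 0 := by
  simpa using h 0 hk hℓ

lemma step_of_apply_ne (hk : k ≤ 0) (hℓ : 0 ≤ ℓ) (hx : x j ≠ P 0) : step P k ℓ b x j = x j :=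
  step_of_not_occurs fun h => hx (h.apply_eq hk hℓ)

lemma iterate_step_of_apply_ne (hk : k ≤ 0) (hℓ : 0 ≤ ℓ) (hx : x j ≠ P 0) (n : ℕ) :
    (step P k ℓ b)^[n] x j = x j := by
  induction n with
  | zero => rfl
  | succ n ih => rw [Function.iterate_succ_apply', step_of_apply_ne hk hℓ (ih ▸ hx), ih]

lemma step_eq_step_of_occurs_iff {j' : ℤ} (hocc : Occurs P k ℓ x j ↔ Occurs P k ℓ y j')
    (h : x j = y j') : step P k ℓ b x j = step P k ℓ b y j' := by
  by_cases hy : Occurs P k ℓ y j'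
  · rw [step_of_occurs hy, step_of_occurs (hocc.mpr hy)]
  · rw [step_of_not_occurs hy, step_of_not_occurs (mt hocc.mp hy), h]

lemma step_congr (hk : k ≤ 0) (hℓ : 0 ≤ ℓ)
    (h : ∀ i, k ≤ i → i ≤ ℓ → x (i + j) = y (i + j)) :
    step P k ℓ b x j = step P k ℓ b y j := by
  have hocc : Occurs P k ℓ x j ↔ Occurs P k ℓ y j :=
    forall_congr' fun i => forall_congr' fun h₁ => forall_congr' fun h₂ => by rw [h i h₁ h₂]
  exact step_eq_step_of_occurs_iff hocc (by simpa using h 0 hk hℓ)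

variable (P k ℓ b) in
lemma commute_step_shift (r : ℤ) :
    Function.Commute (step P k ℓ b) (fun x i => x (i + r)) := by
  intro x
  funext j
  exact step_eq_step_of_occurs_iff (by simp only [Occurs, add_assoc]) rfl

lemma iterate_step_eqOn_of_ne_at_ends (hk : k ≤ 0) (hℓ : 0 ≤ ℓ) {L R : ℤ}
    (hxy : ∀ i, L ≤ i → i ≤ R → x i = y i)
    (hL : ∀ i, L ≤ i → i ≤ L + (ℓ - k) → x i ≠ P 0)
    (hR : ∀ i, R - (ℓ - k) ≤ i → i ≤ R → x i ≠ P 0) (n : ℕ) :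
    ∀ i, L ≤ i → i ≤ R → (step P k ℓ b)^[n] x i = (step P k ℓ b)^[n] y i := by
  induction n with
  | zero => exact hxy
  | succ n ih =>
    intro i h₁ h₂
    by_cases hend : i ≤ L + (ℓ - k) ∨ R - (ℓ - k) ≤ i
    · have hx : x i ≠ P 0 := by rcases hend with h | h; exacts [hL i h₁ h, hR i h h₂]
      rw [iterate_step_of_apply_ne hk hℓ hx, iterate_step_of_apply_ne hk hℓ (hxy i h₁ h₂ ▸ hx),
        hxy i h₁ h₂]
    · rw [Function.iterate_succ_apply', Function.iterate_succ_apply']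
      exact step_congr hk hℓ fun i' h₁' h₂' => ih _ (by omega) (by omega)

lemma isEquicontinuityPoint_of_apply_ne (hk : k ≤ 0) (hℓ : 0 ≤ ℓ) {N : ℕ}
    (hx : ∀ i : ℤ, N < i.natAbs → x i ≠ P 0) :
    IsEquicontinuityPoint (step P k ℓ b) x := by
  refine isEquicontinuityPoint_of_forall_eqOn fun M => ⟨max N M + 1 + (ℓ - k).toNat, ?_⟩
  intro y hy n i h₁ h₂
  refine (iterate_step_eqOn_of_ne_at_ends hk hℓ (L := -(max N M + 1 + (ℓ - k).toNat : ℕ))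
    (R := (max N M + 1 + (ℓ - k).toNat : ℕ)) (fun i h₁ h₂ => (hy i h₁ h₂).symm)
    (fun i h₁ h₂ => hx i (by omega)) (fun i h₁ h₂ => hx i (by omega)) n i
    (by omega) (by omega)).symm

lemma exists_isEquicontinuityPoint_shiftDist_lt (hk : k ≤ 0) (hℓ : 0 ≤ ℓ) (hb : b ≠ P 0)
    (x : ℤ → A) {ε : ℝ} (hε : 0 < ε) :
    ∃ y : ℤ → A, IsEquicontinuityPoint (step P k ℓ b) y ∧ shiftDist x y < ε := by
  obtain ⟨N, hN⟩ := exists_pow_lt_of_lt_one hε (by norm_num : (2 : ℝ)⁻¹ < 1)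
  classical
  refine ⟨fun i => if i.natAbs ≤ N then x i else b, ?_, ?_⟩
  · exact isEquicontinuityPoint_of_apply_ne hk hℓ (N := N) fun i hi => by
      simpa [show ¬ i.natAbs ≤ N by omega] using hb
  · calc shiftDist x _ ≤ (2 : ℝ) ^ (-(N : ℤ)) :=
          shiftDist_le_of_eqOn N fun i h₁ h₂ => by simp [show i.natAbs ≤ N by omega]
      _ < ε := by rwa [zpow_neg, zpow_natCast, ← inv_pow]

lemma isEquicontinuityPoint_of_idempotent (hk : k ≤ 0) (hℓ : 0 ≤ ℓ)
    (h : step P k ℓ b ∘ step P k ℓ b = step P k ℓ b) (x : ℤ → A) :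
    IsEquicontinuityPoint (step P k ℓ b) x := by
  have hiter : ∀ n : ℕ, (step P k ℓ b)^[n + 1] = step P k ℓ b := fun n => by
    induction n with
    | zero => rfl
    | succ n ih => rw [Function.iterate_succ', ih, h]
  refine isEquicontinuityPoint_of_forall_eqOn fun N => ⟨N + (ℓ - k).toNat, ?_⟩
  rintro y hy (_ | n) i h₁ h₂
  · exact hy i (by omega) (by omega)
  · rw [hiter]
    exact step_congr hk hℓ fun i' h₁' h₂' => hy _ (by omega) (by omega)

end Step

section Wave

variable {P : ℤ → A} {k ℓ : ℤ} {b : A} {s : ℤ} {v : ℤ → A}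

/-- Firing the pattern at `0` recreates it at `-s` (on the overlap of the two windows). -/
structure IsWaveShift (P : ℤ → A) (k ℓ : ℤ) (b : A) (s : ℤ) : Prop where
  left_le : k ≤ s
  le_right : s ≤ ℓ
  ne_zero : s ≠ 0
  apply_eq : P s = b
  apply_add : ∀ j, j ≠ 0 → k ≤ j → j ≤ ℓ → k ≤ j + s → j + s ≤ ℓ → P j = P (j + s)

lemma Occurs.apply_add_ne (hk : k ≤ 0) (hℓ : 0 ≤ ℓ) (hs₁ : k ≤ s) (hs₂ : s ≤ ℓ)
    (hPs : P s ≠ P 0) {c : ℤ} (h : Occurs P k ℓ v c) : v (c + s) ≠ v c := by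
  rwa [h.apply_eq hk hℓ, add_comm, h s hs₁ hs₂]

lemma step_eq_self_of_periodic (hk : k ≤ 0) (hℓ : 0 ≤ ℓ) (hs₁ : k ≤ s) (hs₂ : s ≤ ℓ)
    (hPs : P s ≠ P 0) (hv : ∀ i, v (i + s) = v i) : step P k ℓ b v = v :=
  funext fun c => step_of_not_occurs fun h => h.apply_add_ne hk hℓ hs₁ hs₂ hPs (hv c)

lemma step_eq_shift (hk : k ≤ 0) (hℓ : 0 ≤ ℓ) (hs : IsWaveShift P k ℓ b s) (hb : b ≠ P 0)
    (hocc : Occurs P k ℓ v 0) (hv : ∀ j, j ≠ 0 → v (j + s) = v j) :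
    step P k ℓ b v = fun i => v (i + s) := by
  funext c
  by_cases hc : c = 0
  · subst hc
    rw [step_of_occurs hocc, zero_add, ← hs.apply_eq, ← hocc s hs.left_le hs.le_right, add_zero]
  · have hPs : P s ≠ P 0 := hs.apply_eq ▸ hb
    rw [step_of_not_occurs fun h => h.apply_add_ne hk hℓ hs.left_le hs.le_right hPs (hv c hc),
      hv c hc]

lemma iterate_step_eq_shift (hk : k ≤ 0) (hℓ : 0 ≤ ℓ) (hs : IsWaveShift P k ℓ b s)
    (hb : b ≠ P 0) (hocc : Occurs P k ℓ v 0) (hv : ∀ j, j ≠ 0 → v (j + s) = v j) (n : ℕ) :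
    (step P k ℓ b)^[n] v = fun i => v (i + n * s) := by
  induction n with
  | zero => simp
  | succ n ih =>
    rw [Function.iterate_succ_apply, step_eq_shift hk hℓ hs hb hocc hv,
      (commute_step_shift P k ℓ b s).iterate_left n v, ih]
    funext i
    push_cast
    ring_nf

/-- Every point of `[k, ℓ]` outside the segment from `0` to `s` is linked by one relation to a
point closer to `0`. -/
lemma eqOn_of_apply_add_eq (hk : k ≤ 0) (hℓ : 0 ≤ ℓ) (hs₁ : k ≤ s) (hs₂ : s ≤ ℓ) (hs : s ≠ 0)
    {f g : ℤ → A}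
    (hf : ∀ j, j ≠ 0 → k ≤ j → j ≤ ℓ → k ≤ j + s → j + s ≤ ℓ → f j = f (j + s))
    (hg : ∀ j, j ≠ 0 → k ≤ j → j ≤ ℓ → k ≤ j + s → j + s ≤ ℓ → g j = g (j + s))
    (hfg : ∀ i, (0 ≤ i ∧ i ≤ s) ∨ (s ≤ i ∧ i ≤ 0) → f i = g i) :
    ∀ i, k ≤ i → i ≤ ℓ → f i = g i := by
  suffices ∀ n : ℕ, ∀ i, i.natAbs = n → k ≤ i → i ≤ ℓ → f i = g i from fun i => this _ i rfl
  intro n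
  induction n using Nat.strong_induction_on with
  | _ n ih =>
  intro i hn h₁ h₂
  by_cases hseg : (0 ≤ i ∧ i ≤ s) ∨ (s ≤ i ∧ i ≤ 0)
  · exact hfg i hseg
  by_cases hbeyond : (0 < s ∧ s < i) ∨ (i < s ∧ s < 0)
  · have hf' := hf (i - s) (by omega) (by omega) (by omega) (by omega) (by omega)
    have hg' := hg (i - s) (by omega) (by omega) (by omega) (by omega) (by omega)
    rw [sub_add_cancel] at hf' hg'
    rw [← hf', ← hg', ih _ (by omega) _ rfl (by omega) (by omega)]
  · rw [hf i (by omega) h₁ h₂ (by omega) (by omega), hg i (by omega) h₁ h₂ (by omega) (by omega)]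
    by_cases hseg' : (0 ≤ i + s ∧ i + s ≤ s) ∨ (s ≤ i + s ∧ i + s ≤ 0)
    · exact hfg _ hseg'
    · exact ih _ (by omega) _ rfl (by omega) (by omega)

def background (P : ℤ → A) (s i : ℤ) : A :=
  P (i.fmod s)

open Classical in
noncomputable def wave (P : ℤ → A) (b : A) (s i : ℤ) : A :=
  if ∃ m : ℤ, 0 < m ∧ i = m * s then b else background P s i

lemma background_add_mul (i m : ℤ) : background P s (i + m * s) = background P s i := by
  rw [background, background, Int.add_mul_fmod_self_right]

lemma background_add (i : ℤ) : background P s (i + s) = background P s i := by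
  simpa using background_add_mul (P := P) (s := s) i 1

lemma background_of_between {i : ℤ} (h : (0 ≤ i ∧ i < s) ∨ (s < i ∧ i ≤ 0)) :
    background P s i = P i := by
  rw [background]
  rcases h with h | h
  · rw [Int.fmod_eq_of_lt h.1 h.2]
  · have hmod : (-i).fmod (-s) = -i := Int.fmod_eq_of_lt (by omega) (by omega)
    rw [Int.neg_fmod_neg, neg_inj] at hmod
    rw [hmod]

lemma exists_pos_mul_add_iff {j : ℤ} (hj : j ≠ 0) :
    (∃ m : ℤ, 0 < m ∧ j + s = m * s) ↔ ∃ m : ℤ, 0 < m ∧ j = m * s := by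
  constructor
  · rintro ⟨m, hm, h⟩
    have hm1 : m ≠ 1 := by rintro rfl; exact hj (by linarith)
    exact ⟨m - 1, by omega, by linarith [sub_mul m 1 s]⟩
  · rintro ⟨m, hm, rfl⟩
    exact ⟨m + 1, by omega, by ring⟩

lemma natAbs_le_of_eq_mul {i m : ℤ} (hs : s ≠ 0) (hm : 0 < m) (h : i = m * s) :
    m.natAbs ≤ i.natAbs ∧ s.natAbs ≤ i.natAbs := by
  have hi : i ≠ 0 := h ▸ mul_ne_zero hm.ne' hs
  exact ⟨Int.natAbs_le_of_dvd_ne_zero ⟨s, h⟩ hi,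
    Int.natAbs_le_of_dvd_ne_zero ⟨m, by rw [h, mul_comm]⟩ hi⟩

lemma wave_add {j : ℤ} (hj : j ≠ 0) : wave P b s (j + s) = wave P b s j := by
  classical
  simp only [wave, background_add]
  exact if_congr (exists_pos_mul_add_iff hj) rfl rfl

lemma wave_of_natAbs_lt {i : ℤ} (hs : s ≠ 0) (hi : i.natAbs < s.natAbs) :
    wave P b s i = background P s i :=
  if_neg fun ⟨_, hm, h⟩ => (natAbs_le_of_eq_mul hs hm h).2.not_gt hi

lemma wave_sub_mul {i : ℤ} {K : ℕ} (hs : s ≠ 0) (hi : i.natAbs ≤ K) :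
    wave P b s (i - K * s) = background P s i := by
  rw [wave, if_neg, sub_eq_add_neg, ← neg_mul, background_add_mul]
  rintro ⟨m, hm, h⟩
  have := (natAbs_le_of_eq_mul hs (by omega : 0 < m + K)
    (show i = (m + K) * s by rw [add_mul]; linarith)).1
  omega

lemma occurs_wave (hk : k ≤ 0) (hℓ : 0 ≤ ℓ) (hs : IsWaveShift P k ℓ b s) :
    Occurs P k ℓ (wave P b s) 0 := by
  intro i h₁ h₂
  rw [add_zero]
  refine eqOn_of_apply_add_eq hk hℓ hs.left_le hs.le_right hs.ne_zero
    (fun j hj _ _ _ _ => (wave_add hj).symm) hs.apply_add (fun i hi => ?_) i h₁ h₂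
  by_cases his : i = s
  · rw [his, hs.apply_eq, wave, if_pos ⟨1, one_pos, (one_mul s).symm⟩]
  · rw [wave_of_natAbs_lt hs.ne_zero (by omega), background_of_between (by omega)]

theorem not_isEquicontinuityPoint_background (hk : k ≤ 0) (hℓ : 0 ≤ ℓ)
    (hs : IsWaveShift P k ℓ b s) (hb : b ≠ P 0) :
    ¬ IsEquicontinuityPoint (step P k ℓ b) (background P s) := by
  intro h
  obtain ⟨K, hK⟩ := h.exists_iterate_apply_zero_eq
  have hfix : step P k ℓ b (background P s) = background P s :=
    step_eq_self_of_periodic hk hℓ hs.left_le hs.le_right (hs.apply_eq ▸ hb) background_add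
  have hwave := iterate_step_eq_shift hk hℓ hs hb (occurs_wave hk hℓ hs)
    (fun j hj => wave_add hj) (K + 1)
  have hzero := hK (fun i => wave P b s (i + -(K * s)))
    (fun i h₁ h₂ => by rw [← sub_eq_add_neg, wave_sub_mul hs.ne_zero (by omega)]) (K + 1)
  rw [(commute_step_shift P k ℓ b _).iterate_left, hwave, Function.iterate_fixed hfix] at hzero
  have hs' : (0 : ℤ) + -(K * s) + ((K + 1 : ℕ) : ℤ) * s = s := by push_cast; ring
  dsimp only at hzero
  rw [hs', wave, if_pos ⟨1, one_pos, (one_mul s).symm⟩, background, Int.zero_fmod] at hzero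
  exact hb hzero

end Wave

section Extraction

variable {P : ℤ → A} {k ℓ : ℤ} {b : A}

lemma eq_of_modEq_of_periodicOn {d : ℤ} (hd : 0 < d)
    (hper : ∀ i, k ≤ i → i + d ≤ ℓ → P i = P (i + d)) {i j : ℤ}
    (hi₁ : k ≤ i) (hi₂ : i ≤ ℓ) (hj₁ : k ≤ j) (hj₂ : j ≤ ℓ) (hij : i ≡ j [ZMOD d]) :
    P i = P j := by
  have hchain : ∀ n : ℕ, ∀ i, k ≤ i → i + n * d ≤ ℓ → P i = P (i + n * d) := by
    intro n
    induction n with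
    | zero => simp
    | succ n ih =>
      intro i h₁ h₂
      push_cast at h₂ ⊢
      have hnd : 0 ≤ (n : ℤ) * d := by positivity
      rw [ih i h₁ (by linarith), hper _ (by linarith) (by linarith)]
      ring_nf
  obtain ⟨m, hm⟩ := hij.dvd
  rcases le_total 0 m with hm₀ | hm₀
  · lift m to ℕ using hm₀
    have hj : j = i + m * d := by linarith [mul_comm d m]
    exact hj ▸ hchain m i hi₁ (hj ▸ hj₂)
  · obtain ⟨n, hn⟩ : ∃ n : ℕ, m = -n := ⟨m.natAbs, by omega⟩
    have hi : i = j + n * d := by subst hn; linarith [mul_comm d n]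
    exact (hi ▸ hchain n j hj₁ (hi ▸ hi₂)).symm

/-- A value other than `P 0` travels by `s` through the `d`-periodic `P`, and after `d` steps it
is back in the class of `0`. -/
lemma apply_eq_apply_zero_of_periodicOn (hk : k ≤ 0) (hℓ : 0 ≤ ℓ) {d s : ℤ} (hd : 0 < d)
    (hper : ∀ i, k ≤ i → i + d ≤ ℓ → P i = P (i + d)) (hs₁ : k ≤ s) (hs₂ : s ≤ ℓ)
    (hmove : ∀ i, k ≤ i → i ≤ ℓ → k ≤ i + s → i + s ≤ ℓ → P i ≠ P 0 → P (i + s) = P i)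
    (hlen : d + s.natAbs ≤ ℓ - k + 1) :
    P s = P 0 := by
  by_contra hPs
  have hrep : ∀ c, ∃ r, r ≡ c [ZMOD d] ∧ k ≤ r ∧ r ≤ ℓ ∧ k ≤ r + s ∧ r + s ≤ ℓ := by
    intro c
    have h₀ := Int.emod_nonneg (c - max k (k - s)) hd.ne'
    have h₁ := Int.emod_lt_of_pos (c - max k (k - s)) hd
    refine ⟨max k (k - s) + (c - max k (k - s)) % d, ?_, by omega, by omega, by omega, by omega⟩
    simpa using (Int.mod_modEq (c - max k (k - s)) d).add_left (max k (k - s))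
  have horbit : ∀ n : ℕ, ∃ c, k ≤ c ∧ c ≤ ℓ ∧ c ≡ (n + 1) * s [ZMOD d] ∧ P c ≠ P 0 := by
    intro n
    induction n with
    | zero => exact ⟨s, hs₁, hs₂, by simp, hPs⟩
    | succ n ih =>
      obtain ⟨c, hc₁, hc₂, hc, hPc⟩ := ih
      obtain ⟨r, hr, hr₁, hr₂, hr₃, hr₄⟩ := hrep c
      have hPr : P r = P c := eq_of_modEq_of_periodicOn hd hper hr₁ hr₂ hc₁ hc₂ hr
      refine ⟨r + s, hr₃, hr₄, ?_, ?_⟩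
      · convert (hr.trans hc).add_right s using 1
        push_cast
        ring
      · rw [hmove r hr₁ hr₂ hr₃ hr₄ (hPr ▸ hPc), hPr]
        exact hPc
  obtain ⟨c, hc₁, hc₂, hc, hPc⟩ := horbit (d.toNat - 1)
  have hc₀ : c ≡ 0 [ZMOD d] := by
    refine hc.trans (Int.modEq_zero_iff_dvd.mpr ⟨s, ?_⟩)
    rw [show ((d.toNat - 1 : ℕ) : ℤ) + 1 = d by omega]
  exact hPc (eq_of_modEq_of_periodicOn hd hper hc₁ hc₂ hk hℓ hc₀)

lemma exists_isWaveShift_of_occurs_step (hk : k ≤ 0) (hℓ : 0 ≤ ℓ) (hb : b ≠ P 0)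
    {z : ℤ → A} (hz : Occurs P k ℓ (step P k ℓ b z) 0) :
    ∃ s, IsWaveShift P k ℓ b s := by
  have hval : ∀ i, k ≤ i → i ≤ ℓ → step P k ℓ b z i = P i := fun i h₁ h₂ => by
    simpa using hz i h₁ h₂
  have hz₀ : ¬ Occurs P k ℓ z 0 := fun h => hb ((step_of_occurs h).symm.trans (hval 0 hk hℓ))
  have hfixed : ∀ i, k ≤ i → i ≤ ℓ → ¬ Occurs P k ℓ z i → z i = P i := fun i h₁ h₂ h =>
    (step_of_not_occurs h).symm.trans (hval i h₁ h₂)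
  obtain ⟨s, hs₁, hs₂, hs⟩ : ∃ s, k ≤ s ∧ s ≤ ℓ ∧ Occurs P k ℓ z s := by
    by_contra! hno
    exact hz₀ fun i h₁ h₂ => by rw [add_zero]; exact hfixed i h₁ h₂ (hno i h₁ h₂)
  have hPs : P s = b := (hval s hs₁ hs₂).symm.trans (step_of_occurs hs)
  refine ⟨s, hs₁, hs₂, fun h => hz₀ (h ▸ hs), hPs, fun j hj h₁ h₂ h₃ h₄ => ?_⟩
  rw [← hs j h₁ h₂]
  refine hfixed _ h₃ h₄ fun ht => hb ?_
  -- Two occurrences at distance `j` make `P` `|j|`-periodic, which is impossible.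
  have hper : ∀ i, k ≤ i → i ≤ ℓ → k ≤ i + j → i + j ≤ ℓ → P i = P (i + j) :=
    fun i h₁ h₂ h₃ h₄ => by rw [← ht i h₁ h₂, ← hs (i + j) h₃ h₄, add_assoc]
  have hper' : ∀ i, k ≤ i → i + j.natAbs ≤ ℓ → P i = P (i + j.natAbs) := fun i h₁ h₂ => by
    rcases le_total 0 j with hj₀ | hj₀
    · rw [Int.natAbs_of_nonneg hj₀] at h₂ ⊢
      exact hper i h₁ (by omega) (by omega) h₂
    · rw [Int.ofNat_natAbs_of_nonpos hj₀] at h₂ ⊢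
      simpa using (hper (i + -j) (by omega) h₂ (by omega) (by omega)).symm
  have hmove : ∀ i, k ≤ i → i ≤ ℓ → k ≤ i + s → i + s ≤ ℓ → P i ≠ P 0 → P (i + s) = P i :=
    fun i h₁ h₂ h₃ h₄ hi => by
      rw [← hs i h₁ h₂]
      exact (hfixed _ h₃ h₄ fun h => hi (by rw [← hs i h₁ h₂, h.apply_eq hk hℓ])).symm
  rw [← hPs]
  exact apply_eq_apply_zero_of_periodicOn hk hℓ (by omega) hper' hs₁ hs₂ hmove (by omega)

lemma exists_isWaveShift_of_not_idempotent (hk : k ≤ 0) (hℓ : 0 ≤ ℓ) (hb : b ≠ P 0)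
    (h : step P k ℓ b ∘ step P k ℓ b ≠ step P k ℓ b) : ∃ s, IsWaveShift P k ℓ b s := by
  obtain ⟨x, hx⟩ := Function.ne_iff.mp h
  obtain ⟨j, hj⟩ := Function.ne_iff.mp hx
  have hocc : Occurs P k ℓ (step P k ℓ b x) j := by_contra fun h' => hj (step_of_not_occurs h')
  refine exists_isWaveShift_of_occurs_step hk hℓ hb (z := fun i => x (i + j)) ?_
  rw [commute_step_shift P k ℓ b j x]
  simpa [Occurs] using hocc

end Extraction

def extendPattern {S : Finset ℤ} (h0 : (0 : ℤ) ∈ S) (p : S → A) (i : ℤ) : A :=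
  if h : i ∈ S then p ⟨i, h⟩ else p ⟨0, h0⟩

lemma step_extendPattern {k ℓ : ℤ} (h0 : (0 : ℤ) ∈ Finset.Icc k ℓ) (p : Finset.Icc k ℓ → A)
    {μ : (Finset.Icc k ℓ → A) → A} (hμ : ∀ z : Finset.Icc k ℓ → A, μ z = z ⟨0, h0⟩ ↔ z ≠ p)
    (x : ℤ → A) (j : ℤ) :
    step (extendPattern h0 p) k ℓ (μ p) x j = μ (fun s : Finset.Icc k ℓ => x (s.1 + j)) := by
  have hpattern :
      (fun s : Finset.Icc k ℓ => x (s.1 + j)) = p ↔ Occurs (extendPattern h0 p) k ℓ x j := by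
    simp only [funext_iff, Subtype.forall, Finset.mem_Icc, Occurs, extendPattern]
    exact forall_congr' fun i =>
      ⟨fun h h₁ h₂ => by simp [h₁, h₂, h], fun h hi => by simpa [hi] using h hi.1 hi.2⟩
  by_cases h : Occurs (extendPattern h0 p) k ℓ x j
  · rw [step_of_occurs h, hpattern.mpr h]
  · rw [step_of_not_occurs h, (hμ _).mpr (mt hpattern.mp h), zero_add]

end UniqueActiveCA

open UniqueActiveCA

theorem not_idempotent_iff_strictly_almost_equicontinuous_general
    {A : Type*}
    (k ℓ : ℤ) (hk : k ≤ 0) (hℓ : 0 ≤ ℓ)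
    (S : Finset ℤ) (hS : S = Finset.Icc k ℓ) (h0 : (0 : ℤ) ∈ S)
    (p : S → A) (μ : (S → A) → A)
    (hμ : ∀ z : S → A, μ z = z ⟨0, h0⟩ ↔ z ≠ p)
    (τ : (ℤ → A) → ℤ → A)
    (hτ : ∀ (x : ℤ → A) (j : ℤ), τ x j = μ (fun s : S => x (s.1 + j))) :
    τ ∘ τ ≠ τ ↔
      ((∀ x : ℤ → A, ∀ ε : ℝ, 0 < ε →
          ∃ y : ℤ → A, IsEquicontinuityPoint τ y ∧ shiftDist x y < ε) ∧
       ¬ (∀ x : ℤ → A, IsEquicontinuityPoint τ x)) := by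
  subst hS
  obtain rfl : τ = step (extendPattern h0 p) k ℓ (μ p) :=
    funext fun x => funext fun j => (hτ x j).trans (step_extendPattern h0 p hμ x j).symm
  have hb : μ p ≠ extendPattern h0 p 0 := fun h => (hμ p).mp (h.trans (dif_pos h0)) rfl
  refine ⟨fun hne => ⟨fun x ε hε => exists_isEquicontinuityPoint_shiftDist_lt hk hℓ hb x hε,
    fun hall => ?_⟩, fun ⟨_, hna⟩ hidem => hna (isEquicontinuityPoint_of_idempotent hk hℓ hidem)⟩
  obtain ⟨s, hs⟩ := exists_isWaveShift_of_not_idempotent hk hℓ hb hne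
  exact not_isEquicontinuityPoint_background hk hℓ hs hb (hall _)

/-- For a CA `τ` with unique active transition `p : S → A`, with `A`
finite with at least two elements and `S` an integer interval containing `0`:
`τ` is not idempotent iff `τ` is strictly almost equicontinuous. -/
theorem not_idempotent_iff_strictly_almost_equicontinuous
    {A : Type*} [Finite A] [Nontrivial A]
    (k ℓ : ℤ) (hk : k ≤ 0) (hℓ : 0 ≤ ℓ)
    (S : Finset ℤ) (hS : S = Finset.Icc k ℓ) (h0 : (0 : ℤ) ∈ S)
    (p : S → A) (μ : (S → A) → A)
    (hμ : ∀ z : S → A, μ z = z ⟨0, h0⟩ ↔ z ≠ p)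
    (τ : (ℤ → A) → ℤ → A)
    (hτ : ∀ (x : ℤ → A) (j : ℤ), τ x j = μ (fun s : S => x (s.1 + j))) :
    τ ∘ τ ≠ τ ↔
      ((∀ x : ℤ → A, ∀ ε : ℝ, 0 < ε →
          ∃ y : ℤ → A, IsEquicontinuityPoint τ y ∧ shiftDist x y < ε) ∧
       ¬ (∀ x : ℤ → A, IsEquicontinuityPoint τ x)) :=
  not_idempotent_iff_strictly_almost_equicontinuous_general k ℓ hk hℓ S hS h0 p μ hμ τ hτ
end

section
/- Let τ : A^ℤ → A^ℤ be a cellular automaton with a unique active transition p ∈ A^S, where S ⊂ ℤ is an integer interval with 0 ∈ S. Then either τ ∘ τ = τ, or τ has infinite order, i.e., τ^m ≠ τ^n for all positive integers m ≠ n. -/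
/-- Occurrence of the (extended) pattern `P` in configuration `x` at position `c`. -/
def OccP {A : Type*} (k l : ℤ) (P : ℤ → A) (x : ℤ → A) (c : ℤ) : Prop :=
  ∀ s : ℤ, k ≤ s → s ≤ l → x (s + c) = P s

theorem chain_gen {A : Type*} (P : ℤ → A) (e : ℤ) (C : ℤ → Prop)
    (hstep : ∀ a, C a → P (a + e) = P a) :
    ∀ (t : ℕ) (a : ℤ), (∀ u : ℕ, u < t → C (a + (u : ℤ) * e)) →
      P (a + (t : ℤ) * e) = P a := by
  intro t
  induction t with
  | zero => intro a _; simp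
  | succ t ih =>
    intro a hC
    have h1 : P ((a + (t : ℤ) * e) + e) = P (a + (t : ℤ) * e) :=
      hstep _ (hC t (Nat.lt_succ_self t))
    have h2 : P (a + (t : ℤ) * e) = P a :=
      ih a (fun u hu => hC u (hu.trans (Nat.lt_succ_self t)))
    have h3 : a + ((t + 1 : ℕ) : ℤ) * e = (a + (t : ℤ) * e) + e := by push_cast; ring
    rw [h3, h1, h2]

/-- Two distinct occurrences of the pattern inside the window `[k,l]` of a
non-idempotency witness are impossible. -/
theorem uat_contra {A : Type*} (k l : ℤ) (hk : k ≤ 0) (hl : 0 ≤ l)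
    (P : ℤ → A) (q : A) (hPq : P 0 ≠ q) (xb : ℤ → A)
    (hvalOcc : ∀ s, k ≤ s → s ≤ l → OccP k l P xb s → P s = q ∧ xb s = P 0)
    (hvalNo : ∀ s, k ≤ s → s ≤ l → ¬ OccP k l P xb s → xb s = P s)
    (n₁ n₂ : ℤ) (h1k : k ≤ n₁) (h1l : n₁ ≤ l) (h2k : k ≤ n₂) (h2l : n₂ ≤ l)
    (hlt : n₁ < n₂) (hO1 : OccP k l P xb n₁) (hO2 : OccP k l P xb n₂) : False := by
  set e : ℤ := n₂ - n₁ with he_def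
  have he : 0 < e := by omega
  have hel : e ≤ l - k := by omega
  -- the "keep-or-transition" step relation
  have hstepGen : ∀ n, OccP k l P xb n → ∀ s, k ≤ s → s ≤ l → k ≤ s + n → s + n ≤ l →
      P (s + n) = P s ∨ (P s = P 0 ∧ P (s + n) = q) := by
    intro n hOn s hs1 hs2 hs3 hs4
    have hx : xb (s + n) = P s := hOn s hs1 hs2
    by_cases hOsn : OccP k l P xb (s + n)
    · rcases hvalOcc (s + n) hs3 hs4 hOsn with ⟨hq1, hq2⟩
      exact Or.inr ⟨hx.symm.trans hq2, hq1⟩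
    · left
      rw [← hvalNo (s + n) hs3 hs4 hOsn, hx]
  -- full periodicity with period e
  have hfull : ∀ a, k ≤ a → a + e ≤ l → P (a + e) = P a := by
    intro a ha1 ha2
    have h1 : xb (a + n₂) = P a := hO2 a ha1 (by omega)
    have h2 : xb ((a + e) + n₁) = P (a + e) := hO1 (a + e) (by omega) (by omega)
    have h3 : (a + e) + n₁ = a + n₂ := by omega
    rw [h3, h1] at h2
    exact h2.symm
  -- the e-periodization of P
  set F : ℤ → A := fun i => P (k + (i - k) % e) with hF_def
  have hFper : ∀ (a t : ℤ), F (a + e * t) = F a := by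
    intro a t
    simp only [hF_def]
    congr 2
    have h : a + e * t - k = (a - k) + e * t := by ring
    rw [h, Int.add_mul_emod_self_left]
  have hFP : ∀ i, k ≤ i → i ≤ l → F i = P i := by
    intro i h1 h2
    have hr0 : 0 ≤ (i - k) % e := Int.emod_nonneg _ (by omega)
    have hr1 : (i - k) % e < e := Int.emod_lt_of_pos _ he
    have hid : e * ((i - k) / e) + (i - k) % e = i - k := Int.mul_ediv_add_emod _ _
    have hdnn : 0 ≤ (i - k) / e := Int.ediv_nonneg (by omega) he.le
    set d : ℤ := (i - k) / e with hd_def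
    set t : ℕ := d.toNat with ht_def
    have htz : ((t : ℕ) : ℤ) = d := Int.toNat_of_nonneg hdnn
    have hieq : i = (k + (i - k) % e) + (t : ℤ) * e := by
      have h5 : (t : ℤ) * e = e * d := by rw [htz]; ring
      linarith [hid]
    have hch := chain_gen P e (fun a => k ≤ a ∧ a + e ≤ l)
      (fun a ha => hfull a ha.1 ha.2) t (k + (i - k) % e)
      (by
        intro u hu
        constructor
        · have : 0 ≤ (u : ℤ) * e := mul_nonneg (by positivity) he.le
          linarith
        · have h6 : ((u : ℤ) + 1) * e ≤ (t : ℤ) * e := by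
            have : ((u : ℤ) + 1) ≤ (t : ℤ) := by exact_mod_cast hu
            exact mul_le_mul_of_nonneg_right this he.le
          have h7 : (k + (i - k) % e) + (u : ℤ) * e + e ≤ (k + (i - k) % e) + (t : ℤ) * e := by
            nlinarith [h6]
          rw [← hieq] at h7
          linarith)
    simp only [hF_def]
    rw [← hieq] at hch
    exact hch.symm
  -- the step relation descends to F, for all integers
  have hstep2 : ∀ i, F (i + n₂) = F i ∨ (F i = P 0 ∧ F (i + n₂) = q) := by
    intro i
    have finish : ∀ (s t₁ t₂ n : ℤ), OccP k l P xb n → k ≤ s → s ≤ l →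
        k ≤ s + n → s + n ≤ l → i = s + e * t₁ → i + n₂ = (s + n) + e * t₂ →
        F (i + n₂) = F i ∨ (F i = P 0 ∧ F (i + n₂) = q) := by
      intro s t₁ t₂ n hO hb1 hb2 hb3 hb4 hd1 hd2
      have hFi : F i = P s := by rw [hd1, hFper s t₁]; exact hFP s hb1 hb2
      have hFi2 : F (i + n₂) = P (s + n) := by
        rw [hd2, hFper (s + n) t₂]; exact hFP (s + n) hb3 hb4
      rcases hstepGen n hO s hb1 hb2 hb3 hb4 with h | ⟨ha, hb⟩
      · left; rw [hFi2, h, ← hFi]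
      · exact Or.inr ⟨by rw [hFi, ha], by rw [hFi2, hb]⟩
    by_cases hA : 0 < n₁
    · -- both positive
      set r : ℤ := (i - k) % e with hr_def
      have hr0 : 0 ≤ r := Int.emod_nonneg _ (by omega)
      have hr1 : r < e := Int.emod_lt_of_pos _ he
      set d : ℤ := (i - k) / e with hd_def
      have hid : e * d + r = i - k := Int.mul_ediv_add_emod _ _
      refine finish (k + r) d (d + 1) n₁ hO1 (by omega) (by omega) (by omega) (by omega)
        (by linarith) ?_
      have h9 : e * (d + 1) = e * d + e := by ring
      linarith
    · by_cases hB : n₂ < 0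
      · -- both negative
        set r : ℤ := (i - (k - n₂)) % e with hr_def
        have hr0 : 0 ≤ r := Int.emod_nonneg _ (by omega)
        have hr1 : r < e := Int.emod_lt_of_pos _ he
        set d : ℤ := (i - (k - n₂)) / e with hd_def
        have hid : e * d + r = i - (k - n₂) := Int.mul_ediv_add_emod _ _
        refine finish ((k - n₂) + r) d d n₂ hO2 (by omega) (by omega) (by omega) (by omega)
          (by linarith) (by linarith)

      · -- mixed: n₁ ≤ 0 ≤ n₂
        have hA' : n₁ ≤ 0 := by omega
        have hB' : 0 ≤ n₂ := by omega
        set r : ℤ := (i - (k - n₂)) % e with hr_def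
        have hr0 : 0 ≤ r := Int.emod_nonneg _ (by omega)
        have hr1 : r < e := Int.emod_lt_of_pos _ he
        set d : ℤ := (i - (k - n₂)) / e with hd_def
        have hid : e * d + r = i - (k - n₂) := Int.mul_ediv_add_emod _ _
        by_cases hs0 : k ≤ (k - n₂) + r
        · refine finish ((k - n₂) + r) d d n₂ hO2 hs0 (by omega) (by omega) (by omega)
            (by linarith) (by linarith)
        · have hrn : r < n₂ := by omega
          refine finish ((k - n₂) + r + e) (d - 1) d n₁ hO1 (by omega) (by omega)
            (by omega) (by omega) ?_ (by linarith)
          have h9 : e * (d - 1) = e * d - e := by ring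
          linarith
    -- done
  -- the walk: F (t * n₂) = q for t ≥ 1
  have hPn2 : P n₂ = q := (hvalOcc n₂ h2k h2l hO2).1
  have walk : ∀ t : ℕ, F ((1 + (t : ℤ)) * n₂) = q := by
    intro t
    induction t with
    | zero =>
      have h : (1 + ((0 : ℕ) : ℤ)) * n₂ = n₂ := by push_cast; ring
      rw [h, hFP n₂ h2k h2l]; exact hPn2
    | succ t ih =>
      have harr : (1 + ((t + 1 : ℕ) : ℤ)) * n₂ = ((1 + (t : ℤ)) * n₂) + n₂ := by
        push_cast; ring
      rw [harr]
      rcases hstep2 ((1 + (t : ℤ)) * n₂) with h | h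
      · rw [h]; exact ih
      · exact h.2
  -- close the cycle
  have het : (((e.toNat - 1 : ℕ)) : ℤ) = e - 1 := by
    have h1 : ((e.toNat : ℕ) : ℤ) = e := Int.toNat_of_nonneg he.le
    omega
  have h1 : F ((1 + ((e.toNat - 1 : ℕ) : ℤ)) * n₂) = q := walk _
  rw [het] at h1
  have h2 : (1 + (e - 1)) * n₂ = 0 + e * n₂ := by ring
  rw [h2, hFper 0 n₂, hFP 0 hk hl] at h1
  exact hPq h1

theorem uat_aux {A : Type*} (k l : ℤ) (hk : k ≤ 0) (hl : 0 ≤ l)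
    (P : ℤ → A) (q : A) (hPq : P 0 ≠ q)
    (τ : (ℤ → A) → ℤ → A)
    (hτq : ∀ x c, OccP k l P x c → τ x c = q)
    (hτid : ∀ x c, ¬ OccP k l P x c → τ x c = x c) :
    τ ∘ τ = τ ∨ (∀ m n : ℕ, 0 < m → 0 < n → m ≠ n → τ^[m] ≠ τ^[n]) := by
  classical
  by_cases Hid : ∀ x c, ¬ OccP k l P (τ x) c
  · left
    funext x c
    exact hτid (τ x) c (Hid x c)
  · right
    push_neg at Hid
    obtain ⟨x0, c0, hOcc⟩ := Hid
    -- shift equivariance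
    have hshift : ∀ (x : ℤ → A) (c i : ℤ), τ (fun u => x (u + c)) i = τ x (i + c) := by
      intro x c i
      by_cases h : OccP k l P x (i + c)
      · rw [hτq _ _ h, hτq]
        intro s h1 h2
        show x ((s + i) + c) = P s
        have h3 : (s + i) + c = s + (i + c) := by ring
        rw [h3]; exact h s h1 h2
      · rw [hτid _ _ h, hτid]
        intro hcon
        apply h
        intro s h1 h2
        have h4 := hcon s h1 h2
        have h3 : (s + i) + c = s + (i + c) := by ring
        rw [← h3]; exact h4
    set xb : ℤ → A := fun u => x0 (u + c0) with hxb
    have hO0 : OccP k l P (τ xb) 0 := by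
      intro s h1 h2
      have h3 : τ xb (s + 0) = τ x0 (s + c0) := by rw [add_zero]; exact hshift x0 c0 s
      rw [h3]; exact hOcc s h1 h2
    have hvals : ∀ s, k ≤ s → s ≤ l → τ xb s = P s := by
      intro s h1 h2
      have h3 := hO0 s h1 h2
      rwa [add_zero] at h3
    have hn0 : ¬ OccP k l P xb 0 := by
      intro h
      exact hPq (((hvals 0 hk hl).symm).trans (hτq xb 0 h))
    have hvalOcc : ∀ s, k ≤ s → s ≤ l → OccP k l P xb s → P s = q ∧ xb s = P 0 := by
      intro s h1 h2 h
      refine ⟨((hvals s h1 h2).symm).trans (hτq xb s h), ?_⟩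
      have h3 := h 0 hk hl
      rwa [zero_add] at h3
    have hvalNo : ∀ s, k ≤ s → s ≤ l → ¬ OccP k l P xb s → xb s = P s := by
      intro s h1 h2 h
      rw [← hτid xb s h]
      exact hvals s h1 h2
    -- find the unique occurrence position j
    have hn0' := hn0
    unfold OccP at hn0'
    push_neg at hn0'
    obtain ⟨j, hj1, hj2, hj3⟩ := hn0'
    rw [add_zero] at hj3
    have hOj : OccP k l P xb j := by
      by_contra hno
      exact hj3 (hvalNo j hj1 hj2 hno)
    have hPjq : P j = q := (hvalOcc j hj1 hj2 hOj).1
    have hj0 : j ≠ 0 := by rintro rfl; exact hn0 hOj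
    -- quasi-periodicity with unique defect at 0
    have hPer : ∀ s, s ≠ 0 → k ≤ s → s ≤ l → k ≤ s + j → s + j ≤ l → P (s + j) = P s := by
      intro s hs0 h1 h2 h3 h4
      have hx : xb (s + j) = P s := hOj s h1 h2
      by_cases hOsj : OccP k l P xb (s + j)
      · exfalso
        rcases lt_trichotomy (s + j) j with hlt | heq | hgt
        · exact uat_contra k l hk hl P q hPq xb hvalOcc hvalNo (s + j) j h3 h4 hj1 hj2
            hlt hOsj hOj
        · exact hs0 (by omega)
        · exact uat_contra k l hk hl P q hPq xb hvalOcc hvalNo j (s + j) hj1 hj2 h3 h4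
            hgt hOj hOsj
      · rw [← hvalNo (s + j) h3 h4 hOsj, hx]
    -- monotonicity helpers for multiples of j
    have hbet1 : ∀ a b : ℤ, 1 ≤ a → a ≤ b → k ≤ j * b → j * b ≤ l → k ≤ j * a ∧ j * a ≤ l := by
      intro a b ha hab hb1 hb2
      rcases lt_or_gt_of_ne hj0 with hneg | hpos
      · have h1 : j * b ≤ j * a := mul_le_mul_of_nonpos_left hab hneg.le
        have h2 : j * a ≤ j * 1 := mul_le_mul_of_nonpos_left ha hneg.le
        rw [mul_one] at h2
        exact ⟨by linarith, by linarith⟩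
      · have h1 : j * a ≤ j * b := mul_le_mul_of_nonneg_left hab hpos.le
        have h2 : j * 1 ≤ j * a := mul_le_mul_of_nonneg_left ha hpos.le
        rw [mul_one] at h2
        exact ⟨by linarith, by linarith⟩
    have hbet0 : ∀ a b : ℤ, 0 ≤ a → a ≤ b → k ≤ j * (-b) → j * (-b) ≤ l →
        k ≤ j * (-a) ∧ j * (-a) ≤ l := by
      intro a b ha hab hb1 hb2
      rcases lt_or_gt_of_ne hj0 with hneg | hpos
      · have h1 : j * (-a) ≤ j * (-b) := mul_le_mul_of_nonpos_left (by omega) hneg.le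
        have h2 : j * 0 ≤ j * (-a) := mul_le_mul_of_nonpos_left (by omega) hneg.le
        rw [mul_zero] at h2
        exact ⟨by linarith, by linarith⟩
      · have h1 : j * (-b) ≤ j * (-a) := mul_le_mul_of_nonneg_left (by omega) hpos.le
        have h2 : j * (-a) ≤ j * 0 := mul_le_mul_of_nonneg_left (by omega) hpos.le
        rw [mul_zero] at h2
        exact ⟨by linarith, by linarith⟩
    -- values of P on positive multiples of j
    have hP2 : ∀ u : ℕ, k ≤ j * (1 + (u : ℤ)) → j * (1 + (u : ℤ)) ≤ l →
        P (j * (1 + (u : ℤ))) = q := by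
      intro u
      induction u with
      | zero => intro _ _; push_cast; rw [mul_one]; exact hPjq
      | succ u ih =>
        intro hb1 hb2
        have harr : j * (1 + ((u + 1 : ℕ) : ℤ)) = j * (1 + (u : ℤ)) + j := by push_cast; ring
        rw [harr] at hb1 hb2 ⊢
        have hbd := hbet1 (1 + (u : ℤ)) (2 + (u : ℤ)) (by omega) (by omega)
          (by rw [show j * (2 + (u : ℤ)) = j * (1 + (u : ℤ)) + j from by ring]; exact hb1)
          (by rw [show j * (2 + (u : ℤ)) = j * (1 + (u : ℤ)) + j from by ring]; exact hb2)
        have hne : j * (1 + (u : ℤ)) ≠ 0 := mul_ne_zero hj0 (by omega)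
        rw [hPer _ hne hbd.1 hbd.2 hb1 hb2]
        exact ih hbd.1 hbd.2
    -- values of P on nonpositive multiples of j
    have hP3 : ∀ u : ℕ, k ≤ j * (-(u : ℤ)) → j * (-(u : ℤ)) ≤ l →
        P (j * (-(u : ℤ))) = P 0 := by
      intro u
      induction u with
      | zero => intro _ _; norm_num
      | succ u ih =>
        intro hb1 hb2
        have hbd := hbet0 (u : ℤ) ((u : ℤ) + 1) (by omega) (by omega)
          (by rw [show (-(((u : ℤ)) + 1)) = (-((u + 1 : ℕ) : ℤ)) from by push_cast; ring];
              exact hb1)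
          (by rw [show (-(((u : ℤ)) + 1)) = (-((u + 1 : ℕ) : ℤ)) from by push_cast; ring];
              exact hb2)
        have hne : j * (-((u + 1 : ℕ) : ℤ)) ≠ 0 := mul_ne_zero hj0 (by push_cast; omega)
        have hst : P (j * (-((u + 1 : ℕ) : ℤ)) + j) = P (j * (-((u + 1 : ℕ) : ℤ))) := by
          apply hPer _ hne hb1 hb2
          · rw [show j * (-((u + 1 : ℕ) : ℤ)) + j = j * (-(u : ℤ)) from by push_cast; ring]
            exact hbd.1
          · rw [show j * (-((u + 1 : ℕ) : ℤ)) + j = j * (-(u : ℤ)) from by push_cast; ring]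
            exact hbd.2
        rw [show j * (-((u + 1 : ℕ) : ℤ)) + j = j * (-(u : ℤ)) from by push_cast; ring] at hst
        rw [← hst]
        exact ih hbd.1 hbd.2
    -- the glider configuration
    set jn : ℤ := |j| with hjn_def
    have hjn : 0 < jn := abs_pos.mpr hj0
    have hjnl : jn ≤ l - k := by rcases abs_cases j with ⟨h, _⟩ | ⟨h, _⟩ <;> omega
    have habs : ∀ b : ℤ, jn ∣ b ↔ j ∣ b := fun b => abs_dvd j b
    set y : ℤ → A := fun i => if j ∣ i then (if 1 ≤ i / j then q else P 0)
      else P (k + (i - k) % jn) with hy_def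
    have hdvdadd : ∀ b c : ℤ, j ∣ c → (j ∣ (b + c) ↔ j ∣ b) := by
      intro b c hc
      constructor
      · intro h
        have h2 := dvd_sub h hc
        simpa using h2
      · intro h
        exact dvd_add h hc
    -- step along the jn-period off the zero class
    have hstepjn : ∀ b, ¬ j ∣ b → k ≤ b → b + jn ≤ l → P (b + jn) = P b := by
      intro b hb h1 h2
      have hb0 : b ≠ 0 := by rintro rfl; exact hb (dvd_zero j)
      rcases abs_cases j with ⟨hj, _⟩ | ⟨hj, _⟩
      · -- jn = j
        rw [show b + jn = b + j from by omega]
        exact hPer b hb0 h1 (by omega) (by omega) (by omega)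
      · -- jn = -j
        have hdj : j ∣ jn := by
          rw [show jn = -j from by omega]
          exact dvd_neg.mpr dvd_rfl
        have hbjn : b + jn ≠ 0 := by
          intro hz
          apply hb
          have h5 : j ∣ b + jn := by rw [hz]; exact dvd_zero j
          exact (hdvdadd b jn hdj).mp h5
        have hst := hPer (b + jn) hbjn (by omega) h2 (by omega)
          (by rw [show b + jn + j = b from by omega]; omega)
        rw [show b + jn + j = b from by omega] at hst
        exact hst.symm
    -- y agrees with P on [k, l]
    have hY1 : ∀ i, k ≤ i → i ≤ l → y i = P i := by
      intro i h1 h2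
      by_cases hd : j ∣ i
      · obtain ⟨t, rfl⟩ := hd
        simp only [hy_def]
        rw [if_pos (Dvd.intro t rfl), Int.mul_ediv_cancel_left t hj0]
        by_cases ht : 1 ≤ t
        · rw [if_pos ht]
          have hcast : ((t - 1).toNat : ℤ) = t - 1 := Int.toNat_of_nonneg (by omega)
          have harr : j * t = j * (1 + ((t - 1).toNat : ℤ)) := by rw [hcast]; ring
          rw [harr]
          exact (hP2 (t - 1).toNat (by rw [← harr]; exact h1) (by rw [← harr]; exact h2)).symm
        · rw [if_neg ht]
          have hcast : (((-t).toNat : ℕ) : ℤ) = -t := Int.toNat_of_nonneg (by omega)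
          have harr : j * t = j * (-(((-t).toNat : ℕ) : ℤ)) := by rw [hcast]; ring
          rw [harr]
          exact (hP3 (-t).toNat (by rw [← harr]; exact h1) (by rw [← harr]; exact h2)).symm
      · simp only [hy_def]
        rw [if_neg hd]
        have hr0 : 0 ≤ (i - k) % jn := Int.emod_nonneg _ (by omega)
        have hr1 : (i - k) % jn < jn := Int.emod_lt_of_pos _ hjn
        have hid : jn * ((i - k) / jn) + (i - k) % jn = i - k := Int.mul_ediv_add_emod _ _
        have hdnn : 0 ≤ (i - k) / jn := Int.ediv_nonneg (by omega) hjn.le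
        set t : ℕ := ((i - k) / jn).toNat with ht_def
        have htz : ((t : ℕ) : ℤ) = (i - k) / jn := Int.toNat_of_nonneg hdnn
        have hieq : i = (k + (i - k) % jn) + (t : ℤ) * jn := by
          have h5 : (t : ℤ) * jn = jn * ((i - k) / jn) := by rw [htz]; ring
          linarith [hid]
        have hnd : ¬ j ∣ (k + (i - k) % jn) := by
          intro hcon
          apply hd
          rw [← habs] at hcon ⊢
          have h6 : (jn : ℤ) ∣ (t : ℤ) * jn := dvd_mul_left jn (t : ℤ)
          have := dvd_add hcon h6
          rwa [← hieq] at this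
        have hch := chain_gen P jn (fun a => ¬ j ∣ a ∧ k ≤ a ∧ a + jn ≤ l)
          (fun a ha => hstepjn a ha.1 ha.2.1 ha.2.2) t (k + (i - k) % jn)
          (by
            intro u hu
            refine ⟨?_, ?_, ?_⟩
            · intro hcon
              apply hnd
              rw [← habs] at hcon ⊢
              have h6 : (jn : ℤ) ∣ (u : ℤ) * jn := dvd_mul_left jn (u : ℤ)
              have := dvd_sub hcon h6
              simpa using this
            · have : 0 ≤ (u : ℤ) * jn := mul_nonneg (by positivity) hjn.le
              linarith
            · have h6 : ((u : ℤ) + 1) * jn ≤ (t : ℤ) * jn := by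
                have : ((u : ℤ) + 1) ≤ (t : ℤ) := by exact_mod_cast hu
                exact mul_le_mul_of_nonneg_right this hjn.le
              nlinarith [hieq, h2])
        rw [← hieq] at hch
        exact hch.symm
    -- translation property of y off 0
    have hY2 : ∀ i : ℤ, i ≠ 0 → y (i + j) = y i := by
      intro i hi
      by_cases hd : j ∣ i
      · obtain ⟨t, rfl⟩ := hd
        have ht0 : t ≠ 0 := by rintro rfl; simp at hi
        have e1 : y (j * t) = (if 1 ≤ t then q else P 0) := by
          simp only [hy_def]
          rw [if_pos (Dvd.intro t rfl), Int.mul_ediv_cancel_left t hj0]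
        have e2 : y (j * t + j) = (if 1 ≤ t + 1 then q else P 0) := by
          simp only [hy_def]
          rw [show j * t + j = j * (t + 1) from by ring, if_pos (Dvd.intro (t + 1) rfl),
            Int.mul_ediv_cancel_left (t + 1) hj0]
        rw [e1, e2]
        rcases lt_or_gt_of_ne ht0 with h | h
        · rw [if_neg (by omega), if_neg (by omega)]
        · rw [if_pos (by omega), if_pos (by omega)]
      · have hd2 : ¬ j ∣ (i + j) := by
          intro hcon
          exact hd ((hdvdadd i j dvd_rfl).mp hcon)
        simp only [hy_def]
        rw [if_neg hd, if_neg hd2]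
        congr 2
        rcases abs_cases j with ⟨hj, _⟩ | ⟨hj, _⟩
        · rw [show i + j - k = (i - k) + jn * 1 from by omega, Int.add_mul_emod_self_left]
        · rw [show i + j - k = (i - k) + jn * (-1) from by omega, Int.add_mul_emod_self_left]
    -- basic values of y
    have hy0 : y 0 = P 0 := by
      simp only [hy_def]
      rw [if_pos (dvd_zero j), Int.zero_ediv]
      norm_num
    have hytj : ∀ t : ℤ, 1 ≤ t → y (t * j) = q := by
      intro t ht
      simp only [hy_def]
      rw [if_pos (dvd_mul_left j t), Int.mul_ediv_cancel t hj0, if_pos ht]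
    have hOccy0 : OccP k l P y 0 := by
      intro s h1 h2
      rw [add_zero]
      exact hY1 s h1 h2
    have hNoOcc : ∀ c : ℤ, c ≠ 0 → ¬ OccP k l P y c := by
      intro c hc h
      have h0' := h 0 hk hl
      rw [zero_add] at h0'
      have hj' := h j hj1 hj2
      have hcm : j + c = c + j := by ring
      rw [hcm, hY2 c hc, h0', hPjq] at hj'
      exact hPq hj'
    -- the glider property
    have gl : ∀ i : ℤ, τ y i = y (i + j) := by
      intro i
      by_cases hi : i = 0
      · subst hi
        rw [hτq y 0 hOccy0, zero_add]
        have h5 : y (1 * j) = q := hytj 1 le_rfl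
        rw [one_mul] at h5
        exact h5.symm
      · rw [hτid y i (hNoOcc i hi)]
        exact (hY2 i hi).symm
    -- iterates of the glider
    have It : ∀ m : ℕ, τ^[m] y = fun i => y (i + (m : ℤ) * j) := by
      intro m
      induction m with
      | zero => funext i; simp
      | succ m ih =>
        rw [Function.iterate_succ_apply', ih]
        funext i
        have h1 : τ (fun u => y (u + (m : ℤ) * j)) i = τ y (i + (m : ℤ) * j) :=
          hshift y ((m : ℤ) * j) i
        rw [h1, gl]
        congr 1
        push_cast
        ring
    -- conclude
    have key : ∀ m n : ℕ, m < n → τ^[m] ≠ τ^[n] := by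
      intro m n hmn hEq
      have h1 := congrFun (congrFun hEq y) (-(m : ℤ) * j)
      rw [It m, It n] at h1
      simp only at h1
      rw [show -(m : ℤ) * j + (m : ℤ) * j = 0 from by ring] at h1
      rw [show -(m : ℤ) * j + (n : ℤ) * j = ((n : ℤ) - (m : ℤ)) * j from by ring] at h1
      rw [hy0, hytj ((n : ℤ) - (m : ℤ)) (by omega)] at h1
      exact hPq h1
    intro m n _ _ hmn
    rcases hmn.lt_or_gt with h | h
    · exact key m n h
    · exact fun hEq => key n m h hEq.symm

/-- A CA `τ` with a unique active transition `p : S → A`, where `S`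
is an integer interval containing `0`, is either idempotent or has infinite order
(`τ^m ≠ τ^n` for all positive integers `m ≠ n`). -/
theorem idempotent_or_infinite_order
    {A : Type*} [Nontrivial A]
    (k ℓ : ℤ) (hk : k ≤ 0) (hℓ : 0 ≤ ℓ)
    (S : Finset ℤ) (hS : S = Finset.Icc k ℓ) (h0 : (0 : ℤ) ∈ S)
    (p : S → A) (μ : (S → A) → A)
    (hμ : ∀ z : S → A, μ z = z ⟨0, h0⟩ ↔ z ≠ p)
    (τ : (ℤ → A) → ℤ → A)
    (hτ : ∀ (x : ℤ → A) (j : ℤ), τ x j = μ (fun s : S => x (s.1 + j))) :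
    τ ∘ τ = τ ∨ (∀ m n : ℕ, 0 < m → 0 < n → m ≠ n → τ^[m] ≠ τ^[n]) := by
  classical
  set q : A := μ p with hq_def
  have hq : p ⟨0, h0⟩ ≠ q := by
    intro h
    exact (hμ p).mp h.symm rfl
  set P : ℤ → A := fun i => if h : i ∈ S then p ⟨i, h⟩ else q with hP_def
  have hmem : ∀ i : ℤ, i ∈ S ↔ k ≤ i ∧ i ≤ ℓ := by
    intro i; rw [hS, Finset.mem_Icc]
  have hPs : ∀ (s : ℤ) (hs : s ∈ S), P s = p ⟨s, hs⟩ := by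
    intro s hs; simp only [hP_def]; rw [dif_pos hs]
  have hPq : P 0 ≠ q := by rw [hPs 0 h0]; exact hq
  have hτq : ∀ x c, OccP k ℓ P x c → τ x c = q := by
    intro x c h
    rw [hτ]
    have hpat : (fun s : S => x (s.1 + c)) = p := by
      funext s
      obtain ⟨s, hs⟩ := s
      have hb := (hmem s).mp hs
      have h1 := h s hb.1 hb.2
      rw [h1, hPs s hs]
    rw [hpat]
  have hτid : ∀ x c, ¬ OccP k ℓ P x c → τ x c = x c := by
    intro x c h
    rw [hτ]
    have hne : (fun s : S => x (s.1 + c)) ≠ p := by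
      intro heq
      apply h
      intro s h1 h2
      have hs : s ∈ S := (hmem s).mpr ⟨h1, h2⟩
      have h3 := congrFun heq ⟨s, hs⟩
      simp only at h3
      rw [hPs s hs]
      exact h3
    have h4 := (hμ _).mpr hne
    rw [h4]
    show x (0 + c) = x c
    rw [zero_add]
  exact uat_aux k ℓ hk hℓ P q hPq τ hτq hτid
end

section
/- Let τ : A^ℤ → A^ℤ be a cellular automaton with a unique active transition p ∈ A^S. Then τ is almost equicontinuous: the set of equicontinuous points of τ is dense in A^ℤ. -/
/-- If `x` and `y` agree on `[-m, m]` then `shiftDist x y ≤ 2^(-m)`. -/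
lemma shiftDist_le_of_agree {A : Type*} (x y : ℤ → A) (m : ℕ)
    (h : ∀ i : ℤ, -(m : ℤ) ≤ i → i ≤ (m : ℤ) → x i = y i) :
    shiftDist x y ≤ (2 : ℝ) ^ (-(m : ℤ)) := by
  unfold shiftDist
  split_ifs with hxy
  · positivity
  · apply zpow_le_zpow_right₀ (by norm_num : (1:ℝ) ≤ 2)
    simp only [neg_le_neg_iff, Nat.cast_le]
    obtain ⟨i₀, hi₀⟩ := Function.ne_iff.mp hxy
    refine le_csSup ⟨i₀.natAbs, fun n hn => ?_⟩ h
    by_contra hlt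
    push_neg at hlt
    exact hi₀ (hn i₀ (by omega) (by omega))

/-- For every `ε > 0` there is `m` with `2^(-m) < ε`. -/
lemma exists_two_zpow_neg_lt (ε : ℝ) (hε : 0 < ε) : ∃ m : ℕ, (2 : ℝ) ^ (-(m : ℤ)) < ε := by
  obtain ⟨m, hm⟩ := exists_pow_lt_of_lt_one hε (by norm_num : (1/2 : ℝ) < 1)
  refine ⟨m, ?_⟩
  have : (2 : ℝ) ^ (-(m : ℤ)) = (1/2 : ℝ) ^ m := by
    rw [zpow_neg, zpow_natCast, one_div, inv_pow]
  rw [this]; exact hm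

/-- A CA `τ` with a unique active transition `p : S → A` is almost
equicontinuous: its set of equicontinuous points is dense in `A^ℤ`. -/
theorem almost_equicontinuous
    {A : Type*} [Nontrivial A]
    (S : Finset ℤ) (h0 : (0 : ℤ) ∈ S)
    (p : S → A) (μ : (S → A) → A)
    (hμ : ∀ z : S → A, μ z = z ⟨0, h0⟩ ↔ z ≠ p)
    (τ : (ℤ → A) → ℤ → A)
    (hτ : ∀ (x : ℤ → A) (j : ℤ), τ x j = μ (fun s : S => x (s.1 + j))) :
    ∀ x : ℤ → A, ∀ ε : ℝ, 0 < ε →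
      ∃ y : ℤ → A, IsEquicontinuityPoint τ y ∧ shiftDist x y < ε := by
  -- Key fact: a cell whose value differs from `p(0)` never changes.
  have frozen : ∀ (y : ℤ → A) (j : ℤ), y j ≠ p ⟨0, h0⟩ → ∀ n : ℕ, τ^[n] y j = y j := by
    intro y j hyj n
    induction n with
    | zero => rfl
    | succ n ih =>
      rw [Function.iterate_succ_apply', hτ]
      have hz : (fun s : S => τ^[n] y (s.1 + j)) ≠ p := by
        intro hc
        have h1 : τ^[n] y ((0 : ℤ) + j) = p ⟨0, h0⟩ := congrFun hc ⟨0, h0⟩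
        rw [zero_add, ih] at h1
        exact hyj h1
      rw [(hμ _).mpr hz]
      simpa using ih
  obtain ⟨a, ha⟩ := exists_ne (p ⟨0, h0⟩)
  intro x ε hε
  obtain ⟨k, hk⟩ := exists_two_zpow_neg_lt ε hε
  -- the point: `x` on `[-k,k]`, the frozen symbol `a` elsewhere
  refine ⟨fun i => if i.natAbs ≤ k then x i else a, ?_, ?_⟩
  · -- equicontinuity
    set y : ℤ → A := fun i => if i.natAbs ≤ k then x i else a with hy
    intro ε' hε'
    obtain ⟨m, hm⟩ := exists_two_zpow_neg_lt ε' hε'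
    set R : ℕ := S.sup Int.natAbs + 1 with hRdef
    have hRS : ∀ s : S, s.1.natAbs ≤ R := fun s =>
      le_trans (Finset.le_sup s.2) (Nat.le_succ _)
    set K : ℕ := max k m with hKdef
    refine ⟨K + R, by omega, ?_⟩
    intro y' hagree n
    have main : ∀ n : ℕ, ∀ i : ℤ, i.natAbs ≤ K + R → τ^[n] y' i = τ^[n] y i := by
      intro n
      induction n with
      | zero => intro i hi; exact hagree i (by omega) (by omega)
      | succ n ih =>
        intro i hi
        by_cases hiK : i.natAbs ≤ K
        · rw [Function.iterate_succ_apply', Function.iterate_succ_apply', hτ, hτ]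
          congr 1
          funext s
          exact ih (s.1 + i) (by have := hRS s; omega)
        · -- frozen wall cells
          have hyi : y i = a := by
            rw [hy]; simp only []
            rw [if_neg (by omega)]
          have hy'i : y' i = y i := hagree i (by omega) (by omega)
          rw [frozen y' i (by rw [hy'i, hyi]; exact ha) (n + 1),
            frozen y i (by rw [hyi]; exact ha) (n + 1), hy'i]
    exact lt_of_le_of_lt
      (shiftDist_le_of_agree _ _ m (fun i h1 h2 => main n i (by omega))) hm
  · -- distance to x
    refine lt_of_le_of_lt (shiftDist_le_of_agree x _ k (fun i h1 h2 => ?_)) hk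
    rw [if_pos (by omega)]
end

section
/- Let τ : A^ℤ → A^ℤ be a cellular automaton with a unique active transition p ∈ A^S, let a := μ(p), and let r := max{max(S), |min(S)|}. Then the constant word a of length r+1 is a blocking word for τ: for every x ∈ A^ℤ with x(i) = a for all i ∈ [0, r], and for every n ≥ 0, one has τ^n(x)(i) = a for all i ∈ [0, r]. -/
/-- For a CA `τ` with a unique active transition `p : S → A`, with
`a := μ(p)` and `r := max{max S, |min S|}`, the constant word `a` of length `r+1` is
a blocking word: if `x(i) = a` for all `i ∈ [0, r]`, then `τⁿ(x)(i) = a` for all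
`n ≥ 0` and all `i ∈ [0, r]`. -/
theorem constant_blocking_word
    {A : Type*} [Nontrivial A]
    (S : Finset ℤ) (h0 : (0 : ℤ) ∈ S)
    (p : S → A) (μ : (S → A) → A)
    (hμ : ∀ z : S → A, μ z = z ⟨0, h0⟩ ↔ z ≠ p)
    (τ : (ℤ → A) → ℤ → A)
    (hτ : ∀ (x : ℤ → A) (j : ℤ), τ x j = μ (fun s : S => x (s.1 + j)))
    (a : A) (ha : a = μ p)
    (r : ℤ) (hr : r = max (S.max' ⟨0, h0⟩) |S.min' ⟨0, h0⟩|) :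
    ∀ x : ℤ → A, (∀ i : ℤ, 0 ≤ i → i ≤ r → x i = a) →
      ∀ n : ℕ, ∀ i : ℤ, 0 ≤ i → i ≤ r → τ^[n] x i = a := by
  intro x hx n
  induction n with
  | zero => simpa using hx
  | succ n ih =>
    intro i hi0 hir
    rw [Function.iterate_succ_apply', hτ]
    by_cases h : (fun s : S => τ^[n] x (s.1 + i)) = p
    · rw [h, ← ha]
    · rw [(hμ _).mpr h]
      simpa using ih i hi0 hir
end

section
/- Let τ : A^ℤ → A^ℤ be a cellular automaton with a unique active transition p ∈ A^S. Then τ ∘ τ ≠ τ if and only if there exists x ∈ A^ℤ such that p appears as a subpattern in τ(x), i.e., there exists k ∈ ℤ with (k·τ(x))|_S = p. -/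
/-- A CA `τ` with a unique active transition `p : S → A` is not
idempotent iff there exists `x ∈ A^ℤ` such that `p` appears as a subpattern in
`τ(x)`. -/
theorem not_idempotent_iff_pattern_appears_in_image
    {A : Type*} [Nontrivial A]
    (S : Finset ℤ) (h0 : (0 : ℤ) ∈ S)
    (p : S → A) (μ : (S → A) → A)
    (hμ : ∀ z : S → A, μ z = z ⟨0, h0⟩ ↔ z ≠ p)
    (τ : (ℤ → A) → ℤ → A)
    (hτ : ∀ (x : ℤ → A) (j : ℤ), τ x j = μ (fun s : S => x (s.1 + j))) :
    τ ∘ τ ≠ τ ↔ ∃ (x : ℤ → A) (k : ℤ), (fun s : S => τ x (s.1 + k)) = p := by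
  constructor
  · intro hne
    by_contra h
    push_neg at h
    apply hne
    funext x j
    have hz : (fun s : S => τ x (s.1 + j)) ≠ p := h x j
    have := (hμ _).mpr hz
    simp only [Function.comp_apply, hτ (τ x) j, this]
    norm_num
  · rintro ⟨x, k, hp⟩ hτid
    have h1 : τ (τ x) k = μ p := by rw [hτ (τ x) k, hp]
    have h2 : τ x k = p ⟨0, h0⟩ := by
      have := congrFun hp ⟨0, h0⟩
      simpa using this
    have h3 : μ p ≠ p ⟨0, h0⟩ := fun h => (hμ p).mp h rfl
    have : τ (τ x) k = τ x k := congrFun (congrFun hτid x) k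
    rw [h1, h2] at this
    exact h3 this
end

section
/- Let τ : A^ℤ → A^ℤ be a cellular automaton with a unique active transition p ∈ A^S, with local defining function μ : A^S → A. Then τ ∘ τ ≠ τ if and only if there exists x ∈ A^ℤ such that μ((s·x)|_S) = p(s) for all s ∈ S. -/
/-- A CA `τ` with a unique active transition `p : S → A` is not
idempotent iff there exists `x ∈ A^ℤ` with `μ((s·x)|_S) = p(s)` for all `s ∈ S`. -/
theorem not_idempotent_iff_exists_preimage_of_pattern
    {A : Type*} [Nontrivial A]
    (S : Finset ℤ) (h0 : (0 : ℤ) ∈ S)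
    (p : S → A) (μ : (S → A) → A)
    (hμ : ∀ z : S → A, μ z = z ⟨0, h0⟩ ↔ z ≠ p)
    (τ : (ℤ → A) → ℤ → A)
    (hτ : ∀ (x : ℤ → A) (j : ℤ), τ x j = μ (fun s : S => x (s.1 + j))) :
    τ ∘ τ ≠ τ ↔ ∃ x : ℤ → A, ∀ s : S, μ (fun u : S => x (u.1 + s.1)) = p s := by
  constructor
  · intro hne
    by_contra h
    push_neg at h
    apply hne
    funext x j
    show τ (τ x) j = τ x j
    rw [hτ (τ x) j]
    have key : (fun s : S => τ x (s.1 + j)) ≠ p := by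
      intro heq
      obtain ⟨s, hs⟩ := h (fun i => x (i + j))
      apply hs
      have h2 := congrFun heq s
      rw [hτ] at h2
      have h3 : (fun u : S => x (u.1 + s.1 + j)) = (fun u : S => x (u.1 + (s.1 + j))) := by
        funext u; rw [add_assoc]
      rw [h3]
      exact h2
    rw [(hμ _).mpr key]
    rw [zero_add]
  · rintro ⟨x, hx⟩ hcomp
    have h1 : τ x 0 = p ⟨0, h0⟩ := by
      rw [hτ]
      exact hx ⟨0, h0⟩
    have h2 : (fun s : S => τ x (s.1 + 0)) = p := by
      funext s
      rw [hτ]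
      have h3 : (fun u : S => x (u.1 + (s.1 + 0))) = (fun u : S => x (u.1 + s.1)) := by
        funext u; rw [add_zero]
      rw [h3]
      exact hx s
    have h4 : τ (τ x) 0 ≠ τ x 0 := by
      rw [hτ (τ x) 0, h2, h1]
      intro heq
      exact (hμ p).mp heq rfl
    exact h4 (congrFun (congrFun hcomp x) 0)
end

section
/- Let τ : A^ℤ → A^ℤ be a cellular automaton with a unique active transition p ∈ A^S, with local defining function μ : A^S → A. If x ∈ A^ℤ satisfies μ((s·x)|_S) = p(s) for all s ∈ S, then: (1) x|_S ≠ p; (2) x(0) = p(0); and (3) there exists t ∈ S with t ≠ 0 such that (t·x)|_S = p. -/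
/-- If `x ∈ A^ℤ` satisfies `μ((s·x)|_S) = p(s)` for all `s ∈ S`,
then `x|_S ≠ p`, `x(0) = p(0)`, and `(t·x)|_S = p` for some `t ∈ S \ {0}`. -/
theorem properties_of_preimage_of_pattern
    {A : Type*} [Nontrivial A]
    (S : Finset ℤ) (h0 : (0 : ℤ) ∈ S)
    (p : S → A) (μ : (S → A) → A)
    (hμ : ∀ z : S → A, μ z = z ⟨0, h0⟩ ↔ z ≠ p)
    (τ : (ℤ → A) → ℤ → A)
    (hτ : ∀ (x : ℤ → A) (j : ℤ), τ x j = μ (fun s : S => x (s.1 + j)))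
    (x : ℤ → A) (hx : ∀ s : S, μ (fun u : S => x (u.1 + s.1)) = p s) :
    (fun s : S => x s.1) ≠ p ∧
    x 0 = p ⟨0, h0⟩ ∧
    ∃ t : S, t.1 ≠ 0 ∧ (fun s : S => x (s.1 + t.1)) = p := by
  have hz0ne : (fun u : S => x (u.1 + (0 : ℤ))) ≠ p := by
    intro hz
    have hm := hx ⟨0, h0⟩
    -- μ z0 = p ⟨0,h0⟩ = z0 ⟨0,h0⟩ since z0 = p, so z0 ≠ p: contradiction
    have hne := (hμ _).mp (hm.trans (congrFun hz ⟨0, h0⟩).symm)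
    exact hne hz
  have h1 : (fun s : S => x s.1) ≠ p := by
    intro h
    exact hz0ne (by simpa [add_zero] using h)
  have h2 : x 0 = p ⟨0, h0⟩ := by
    have ha := (hμ _).mpr hz0ne
    have hb := hx ⟨0, h0⟩
    simpa using (hb.symm.trans ha).symm
  refine ⟨h1, h2, ?_⟩
  by_contra hcon
  push_neg at hcon
  apply h1
  funext s
  rcases eq_or_ne s.1 0 with hs0 | hs0
  · have : s = ⟨0, h0⟩ := Subtype.ext hs0
    rw [this]; simpa using h2
  · have hne := hcon s hs0
    have := (hμ _).mpr hne
    have := (hx s).symm.trans this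
    simpa using this.symm
end

section
/- Let S ⊂ ℤ be a finite integer interval with 0 ∈ S, let p : S → A be a pattern, and let x ∈ A^ℤ. Suppose t, r ∈ S with t < r satisfy (t·x)|_S = (r·x)|_S = p, and set m := r − t. Then p is constant on residue classes modulo m: for all s₁, s₂ ∈ S with s₁ ≡ s₂ (mod m), one has p(s₁) = p(s₂). -/
/-!
Shifting `x` by `t` and by `r` gives the same pattern, so `p s = p (s + m)` whenever `s` and
`s + m` both lie in `S`. Since `S` is an interval, any two points of `S` congruent modulo `m` are
joined by a chain of steps of length `m` that stays inside `S`.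
-/

namespace Set.OrdConnected

variable {A : Type*} {S : Set ℤ} {f : ℤ → A} {m : ℤ}

theorem apply_eq_apply_add_nat_mul (hS : S.OrdConnected)
    (hf : ∀ s ∈ S, s + m ∈ S → f s = f (s + m)) (n : ℕ) :
    ∀ s ∈ S, s + n * m ∈ S → f s = f (s + n * m) := by
  induction n with
  | zero => simp
  | succ n ih =>
    intro s hs hs'
    -- `s + m` lies between `s` and `s + (n + 1) * m`, whatever the sign of `m`.
    have hstep : s + m ∈ S := by
      refine hS.uIcc_subset hs hs' ?_
      rcases le_total 0 m with hm | hm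
      · exact Set.mem_uIcc.2 (Or.inl ⟨by linarith, by push_cast; nlinarith⟩)
      · exact Set.mem_uIcc.2 (Or.inr ⟨by push_cast; nlinarith, by linarith⟩)
    have hrest : s + m + n * m ∈ S := by convert hs' using 1; push_cast; ring
    calc f s = f (s + m) := hf s hs hstep
      _ = f (s + m + n * m) := ih _ hstep hrest
      _ = f (s + (n + 1 : ℕ) * m) := by push_cast; ring_nf

theorem apply_eq_of_modEq (hS : S.OrdConnected)
    (hf : ∀ s ∈ S, s + m ∈ S → f s = f (s + m)) {s₁ s₂ : ℤ} (h₁ : s₁ ∈ S) (h₂ : s₂ ∈ S)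
    (hmod : s₁ ≡ s₂ [ZMOD m]) : f s₁ = f s₂ := by
  obtain ⟨k, hk⟩ := hmod.dvd
  obtain ⟨n, rfl | rfl⟩ := Int.eq_nat_or_neg k
  · obtain rfl : s₂ = s₁ + n * m := by linarith
    exact hS.apply_eq_apply_add_nat_mul hf n s₁ h₁ h₂
  · obtain rfl : s₁ = s₂ + n * m := by linarith
    exact (hS.apply_eq_apply_add_nat_mul hf n s₂ h₂ h₁).symm

end Set.OrdConnected

theorem pattern_constant_on_residue_classes_general
    {A : Type*}
    (a b : ℤ) (S : Finset ℤ) (hS : S = Finset.Icc a b)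
    (p : S → A) (x : ℤ → A)
    (t r : ℤ)
    (hxt : (fun s : S => x (s.1 + t)) = p)
    (hxr : (fun s : S => x (s.1 + r)) = p) :
    ∀ (s₁ s₂ : ℤ) (h₁ : s₁ ∈ S) (h₂ : s₂ ∈ S),
      Int.ModEq (r - t) s₁ s₂ → p ⟨s₁, h₁⟩ = p ⟨s₂, h₂⟩ := by
  intro s₁ s₂ h₁ h₂ hmod
  have hp : ∀ s (hs : s ∈ S), p ⟨s, hs⟩ = x (s + t) := fun s hs => (congrFun hxt ⟨s, hs⟩).symm
  have hS' : (S : Set ℤ).OrdConnected := by rw [hS, Finset.coe_Icc]; infer_instance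
  rw [hp, hp]
  refine hS'.apply_eq_of_modEq (f := fun s => x (s + t)) (fun s hs _ => ?_) h₁ h₂ hmod
  rw [← hp s hs, ← congrFun hxr ⟨s, hs⟩, add_assoc, sub_add_cancel]

/-- Let `S` be a finite integer interval with `0 ∈ S`, `p : S → A`
and `x ∈ A^ℤ`. If `t, r ∈ S` with `t < r` satisfy `(t·x)|_S = (r·x)|_S = p`, then
`p` is constant on residue classes modulo `m := r - t` intersected with `S`. -/
theorem pattern_constant_on_residue_classes
    {A : Type*}
    (a b : ℤ) (S : Finset ℤ) (hS : S = Finset.Icc a b) (h0 : (0 : ℤ) ∈ S)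
    (p : S → A) (x : ℤ → A)
    (t r : ℤ) (htS : t ∈ S) (hrS : r ∈ S) (htr : t < r)
    (hxt : (fun s : S => x (s.1 + t)) = p)
    (hxr : (fun s : S => x (s.1 + r)) = p) :
    ∀ (s₁ s₂ : ℤ) (h₁ : s₁ ∈ S) (h₂ : s₂ ∈ S),
      Int.ModEq (r - t) s₁ s₂ → p ⟨s₁, h₁⟩ = p ⟨s₂, h₂⟩ :=
  pattern_constant_on_residue_classes_general a b S hS p x t r hxt hxr
end

section
/- Let S ⊂ ℤ be a finite integer interval with 0 ∈ S, let p : S → A be a pattern, and let x ∈ A^ℤ. Suppose there exist t, r ∈ S with t < r such that (t·x)|_S = (r·x)|_S = p, and suppose that for every s ∈ ℤ with t < s < r and every ε ∈ {t, r}, if s − ε ∈ S then p(s) = p(s − ε). Then p(0) = p(t). -/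
/-- Let `S` be a finite integer interval with `0 ∈ S`, `p : S → A`
and `x ∈ A^ℤ`. Suppose `t, r ∈ S` with `t < r` satisfy `(t·x)|_S = (r·x)|_S = p`, and
for every `s` with `t < s < r` and every `ε ∈ {t, r}`, if `s - ε ∈ S` then
`p(s) = p(s - ε)`. Then `p(0) = p(t)`. -/
theorem pattern_value_at_zero_eq_value_at_t
    {A : Type*}
    (a b : ℤ) (S : Finset ℤ) (hS : S = Finset.Icc a b) (h0 : (0 : ℤ) ∈ S)
    (p : S → A) (x : ℤ → A)
    (t r : ℤ) (htS : t ∈ S) (hrS : r ∈ S) (htr : t < r)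
    (hxt : (fun s : S => x (s.1 + t)) = p)
    (hxr : (fun s : S => x (s.1 + r)) = p)
    (hsub : ∀ s : ℤ, t < s → s < r → ∀ ε : ℤ, (ε = t ∨ ε = r) →
      ∀ (hs : s ∈ S) (hsε : s - ε ∈ S), p ⟨s, hs⟩ = p ⟨s - ε, hsε⟩) :
    p ⟨0, h0⟩ = p ⟨t, htS⟩ := by
  subst hS
  set d := r - t with hd
  have hdpos : 0 < d := by omega
  have hmem : ∀ {m : ℤ}, m ∈ Finset.Icc a b ↔ a ≤ m ∧ m ≤ b := by
    intro m; exact Finset.mem_Icc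
  have h0' := hmem.mp h0
  have ht' := hmem.mp htS
  have hr' := hmem.mp hrS
  -- pointwise forms
  have hpt : ∀ (s : ℤ) (hs : s ∈ Finset.Icc a b), p ⟨s, hs⟩ = x (s + t) :=
    fun s hs => (congrFun hxt ⟨s, hs⟩).symm
  have hpr : ∀ (s : ℤ) (hs : s ∈ Finset.Icc a b), p ⟨s, hs⟩ = x (s + r) :=
    fun s hs => (congrFun hxr ⟨s, hs⟩).symm
  -- one period step
  have step1 : ∀ (s : ℤ) (hs : s ∈ Finset.Icc a b) (hs' : s + d ∈ Finset.Icc a b),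
      p ⟨s + d, hs'⟩ = p ⟨s, hs⟩ := by
    intro s hs hs'
    rw [hpt _ hs', hpr _ hs]
    congr 1
    omega
  -- multi step
  have stepn : ∀ (j : ℕ) (s : ℤ) (hs : s ∈ Finset.Icc a b)
      (hs' : s + (j : ℤ) * d ∈ Finset.Icc a b), p ⟨s + (j : ℤ) * d, hs'⟩ = p ⟨s, hs⟩ := by
    intro j
    induction j with
    | zero =>
        intro s hs hs'
        have : s + (0 : ℕ) * d = s := by push_cast; ring
        congr 1
        exact Subtype.ext this
    | succ j ih =>
        intro s hs hs'
        have hs'' := hmem.mp hs'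
        have hsm : s + (j : ℤ) * d ∈ Finset.Icc a b := by
          apply hmem.mpr
          have := hmem.mp hs
          push_cast at hs'' ⊢
          have hj : (0:ℤ) ≤ (j:ℤ) := Int.natCast_nonneg j
          constructor <;> nlinarith
        have heq : s + ((j : ℕ) + 1 : ℕ) * d = (s + (j : ℤ) * d) + d := by push_cast; ring
        have h1 : p ⟨s + ((j : ℕ) + 1 : ℕ) * d, hs'⟩ = p ⟨(s + (j : ℤ) * d) + d, by rwa [← heq]⟩ := by
          congr 1; exact Subtype.ext heq
        rw [h1, step1 _ hsm, ih _ hs hsm]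
  -- congruence lemma
  have cong : ∀ (m n : ℤ) (hm : m ∈ Finset.Icc a b) (hn : n ∈ Finset.Icc a b),
      d ∣ n - m → p ⟨n, hn⟩ = p ⟨m, hm⟩ := by
    intro m n hm hn hdvd
    rcases le_total m n with h | h
    · obtain ⟨c, hc⟩ := hdvd
      have hc0 : 0 ≤ c := by nlinarith
      have hn' : n = m + (c.toNat : ℤ) * d := by
        rw [Int.toNat_of_nonneg hc0, mul_comm]; linarith
      have := stepn c.toNat m hm (by rwa [← hn'])
      calc p ⟨n, hn⟩ = p ⟨m + (c.toNat : ℤ) * d, by rwa [← hn']⟩ := by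
              congr 1; exact Subtype.ext hn'
        _ = p ⟨m, hm⟩ := this
    · obtain ⟨c, hc⟩ := hdvd
      have hc0 : 0 ≤ -c := by nlinarith
      have hm' : m = n + ((-c).toNat : ℤ) * d := by
        rw [Int.toNat_of_nonneg hc0]; nlinarith
      have h2 := stepn (-c).toNat n hn (by rwa [← hm'])
      have h3 : p ⟨m, hm⟩ = p ⟨n + ((-c).toNat : ℤ) * d, by rwa [← hm']⟩ := by
        congr 1; exact Subtype.ext hm'
      rw [h3, h2]
  -- normalization into the window (t, r]
  set ρ : ℤ → ℤ := fun n => r - (r - n) % d with hρdef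
  have hρlt : ∀ n, t < ρ n := by
    intro n
    have := Int.emod_lt_of_pos (r - n) hdpos
    simp only [hρdef]; omega
  have hρle : ∀ n, ρ n ≤ r := by
    intro n
    have := Int.emod_nonneg (r - n) (by omega : d ≠ 0)
    simp only [hρdef]; omega
  have hρmem : ∀ n, ρ n ∈ Finset.Icc a b := by
    intro n; exact hmem.mpr ⟨by have := hρlt n; omega, by have := hρle n; omega⟩
  have hρdvd : ∀ n, d ∣ n - ρ n := by
    intro n
    have h1 : d ∣ (r - n) - (r - n) % d := Int.dvd_self_sub_of_emod_eq rfl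
    have h2 : n - ρ n = -((r - n) - (r - n) % d) := by simp only [hρdef]; ring
    rw [h2]; exact dvd_neg.mpr h1
  -- the window-walk induction
  have key : ∀ k : ℕ, p ⟨ρ 0, hρmem 0⟩ = p ⟨ρ (-(k * t)), hρmem _⟩ ∨
      p ⟨ρ 0, hρmem 0⟩ = p ⟨r, hrS⟩ := by
    intro k
    induction k with
    | zero =>
        left
        congr 1
        exact Subtype.ext (by norm_num)
    | succ k ih =>
        rcases ih with ih | ih
        · set s := ρ (-(k * t)) with hsdef
          by_cases hsr : s = r
          · right; rw [ih]; congr 1; exact Subtype.ext hsr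
          · left
            have hslt : s < r := lt_of_le_of_ne (hρle _) hsr
            have hsgt : t < s := hρlt _
            have hsS : s ∈ Finset.Icc a b := hρmem _
            have hsb := hmem.mp hsS
            -- at least one of s - t, s - r lies in the interval
            have hone : s - t ∈ Finset.Icc a b ∨ s - r ∈ Finset.Icc a b := by
              rcases le_or_gt (s - t) b with h | h
              · left; exact hmem.mpr ⟨by omega, h⟩
              · right; exact hmem.mpr ⟨by omega, by omega⟩
            have hkey : ∀ (ε : ℤ), (ε = t ∨ ε = r) → (hεS : s - ε ∈ Finset.Icc a b) →
                p ⟨ρ 0, hρmem 0⟩ = p ⟨ρ (-((k + 1 : ℕ) * t)), hρmem _⟩ := by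
              intro ε hε hεS
              rw [ih, hsub s hsgt hslt ε hε hsS hεS]
              apply cong
              -- d ∣ (s - ε) - ρ (-((k+1)) * t)
              obtain ⟨c1, hc1⟩ := hρdvd (-(k * t))
              obtain ⟨c2, hc2⟩ := hρdvd (-((k + 1 : ℕ) * t))
              rcases hε with h | h
              · subst h
                refine ⟨c2 - c1, ?_⟩
                push_cast at hc1 hc2 ⊢
                rw [← hsdef] at hc1
                linear_combination hc2 - hc1
              · subst h
                refine ⟨c2 - c1 - 1, ?_⟩
                push_cast at hc1 hc2 ⊢
                rw [← hsdef] at hc1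
                linear_combination hc2 - hc1
            rcases hone with h | h
            · exact hkey t (Or.inl rfl) h
            · exact hkey r (Or.inr rfl) h
        · right; exact ih
  -- instantiate at k = (d-1).toNat, where the walk reaches r
  have hkd : ρ (-(((d - 1).toNat : ℤ) * t)) = r := by
    have hcast : ((d - 1).toNat : ℤ) = d - 1 := Int.toNat_of_nonneg (by omega)
    have : r - (-(((d - 1).toNat : ℤ) * t)) = d * (1 + t) := by rw [hcast]; ring
    simp only [hρdef, this, Int.mul_emod_right]
    ring
  have hfin := key (d - 1).toNat
  have hend : p ⟨ρ 0, hρmem 0⟩ = p ⟨r, hrS⟩ := by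
    rcases hfin with h | h
    · rw [h]; congr 1; exact Subtype.ext hkd
    · exact h
  have h0ρ : p ⟨0, h0⟩ = p ⟨ρ 0, hρmem 0⟩ := by
    apply (cong _ _ _ _ _).symm
    have := hρdvd 0
    simpa using (dvd_neg.mpr this)
  have hrt : p ⟨r, hrS⟩ = p ⟨t, htS⟩ := cong t r htS hrS ⟨1, by ring⟩
  rw [h0ρ, hend, hrt]
end

section
/- Let S ⊂ ℤ be a finite integer interval with 0 ∈ S, and let τ : A^ℤ → A^ℤ be a cellular automaton with a unique active transition p ∈ A^S, with local defining function μ : A^S → A. Then for every x ∈ A^ℤ satisfying μ((s·x)|_S) = p(s) for all s ∈ S, there exists a unique t ∈ S with t ≠ 0 such that (t·x)|_S = p. -/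
/-- Let `S` be a finite integer interval with `0 ∈ S` and let `τ`
be the CA with unique active transition `p : S → A`. Then every `x ∈ A^ℤ` with
`μ((s·x)|_S) = p(s)` for all `s ∈ S` admits a *unique* `t ∈ S \ {0}` such that
`(t·x)|_S = p`. -/
theorem unique_t
    {A : Type*} [Nontrivial A]
    (a b : ℤ) (S : Finset ℤ) (hS : S = Finset.Icc a b) (h0 : (0 : ℤ) ∈ S)
    (p : S → A) (μ : (S → A) → A)
    (hμ : ∀ z : S → A, μ z = z ⟨0, h0⟩ ↔ z ≠ p)
    (τ : (ℤ → A) → ℤ → A)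
    (hτ : ∀ (x : ℤ → A) (j : ℤ), τ x j = μ (fun s : S => x (s.1 + j))) :
    ∀ x : ℤ → A, (∀ s : S, μ (fun u : S => x (u.1 + s.1)) = p s) →
      ∃! t : ℤ, t ∈ S ∧ t ≠ 0 ∧ (fun s : S => x (s.1 + t)) = p := by
  intro x hx
  classical
  have hmem : ∀ s : ℤ, s ∈ S ↔ a ≤ s ∧ s ≤ b := by simp [hS, Finset.mem_Icc]
  have ha : a ≤ 0 := ((hmem 0).1 h0).1
  have hb : 0 ≤ b := ((hmem 0).1 h0).2
  set q : ℤ → (S → A) := fun t => fun u : S => x (u.1 + t) with hqdef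
  -- basic evaluation
  have hq0eval : ∀ s : ℤ, q s ⟨0, h0⟩ = x s := by
    intro s; show x (0 + s) = x s; rw [zero_add]
  have hxq : ∀ (s : ℤ) (hs : s ∈ S), μ (q s) = p ⟨s, hs⟩ := by
    intro s hs; exact hx ⟨s, hs⟩
  -- dichotomy
  have hD : ∀ (s : ℤ) (hs : s ∈ S), q s = p ∨ x s = p ⟨s, hs⟩ := by
    intro s hs
    by_cases h : q s = p
    · exact Or.inl h
    · right
      have h1 : μ (q s) = q s ⟨0, h0⟩ := (hμ (q s)).2 h
      rw [hq0eval s] at h1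
      rw [← h1, hxq s hs]
  -- if q t = p then x t = p 0
  have hT1 : ∀ (t : ℤ), q t = p → x t = p ⟨0, h0⟩ := by
    intro t hqt
    have := congrFun hqt ⟨0, h0⟩
    rw [hq0eval t] at this; exact this
  -- if q t = p then p t ≠ p 0
  have hT2 : ∀ (t : ℤ) (ht : t ∈ S), q t = p → p ⟨t, ht⟩ ≠ p ⟨0, h0⟩ := by
    intro t ht hqt heq
    have h1 : μ (q t) ≠ q t ⟨0, h0⟩ := by
      intro hcontra; exact ((hμ (q t)).1 hcontra) hqt
    apply h1
    rw [hxq t ht, hq0eval t, heq, ← hT1 t hqt]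
  -- translation fact
  have htrans : ∀ (t : ℤ), q t = p → ∀ (u : ℤ) (hu : u ∈ S), x (u + t) = p ⟨u, hu⟩ := by
    intro t hqt u hu; exact congrFun hqt ⟨u, hu⟩
  -- EXISTENCE
  have hex : ∃ t : ℤ, t ∈ S ∧ t ≠ 0 ∧ q t = p := by
    by_contra hno
    push_neg at hno
    have hx0 : ∀ (s : ℤ) (hs : s ∈ S), s ≠ 0 → x s = p ⟨s, hs⟩ := by
      intro s hs hne
      rcases hD s hs with h | h
      · exact absurd h (hno s hs hne)
      · exact h
    have hq0 : q 0 ≠ p := by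
      intro hq0p
      exact hT2 0 h0 hq0p rfl
    apply hq0
    funext u
    rcases u with ⟨u, hu⟩
    by_cases hu0 : u = 0
    · subst hu0
      show x (0 + 0) = p ⟨0, hu⟩
      rcases hD 0 h0 with h | h
      · exact absurd h hq0
      · rw [show (0:ℤ) + 0 = 0 by ring, h]
    · show x (u + 0) = p ⟨u, hu⟩
      rw [add_zero]
      exact hx0 u hu hu0
  -- UNIQUENESS core: no two distinct
  have huniq : ∀ (t1 t2 : ℤ), t1 ∈ S → t2 ∈ S → q t1 = p → q t2 = p → t1 < t2 → False := by
    intro t1 t2 ht1 ht2 hp1 hp2 hlt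
    have ht1b := (hmem t1).1 ht1
    have ht2b := (hmem t2).1 ht2
    set d : ℤ := t2 - t1 with hddef
    have hd : 0 < d := by omega
    -- single-step periodicity of p
    have hstep : ∀ (w : ℤ) (hw : w ∈ S) (hw' : w + d ∈ S), p ⟨w, hw⟩ = p ⟨w + d, hw'⟩ := by
      intro w hw hw'
      have e1 : x (w + t2) = p ⟨w, hw⟩ := htrans t2 hp2 w hw
      have e2 : x ((w + d) + t1) = p ⟨w + d, hw'⟩ := htrans t1 hp1 _ hw'
      rw [← e1, ← e2]
      congr 1
      ring
    -- chain
    have hchain : ∀ (n : ℕ) (w : ℤ) (hw : w ∈ S) (hw' : w + n * d ∈ S),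
        p ⟨w, hw⟩ = p ⟨w + n * d, hw'⟩ := by
      intro n
      induction n with
      | zero =>
        intro w hw hw'
        congr 1
        exact Subtype.ext (by push_cast; ring)
      | succ m ih =>
        intro w hw hw'
        have hb1 := (hmem w).1 hw
        have hb2 := (hmem _).1 hw'
        push_cast at hb2
        have hmd : (0:ℤ) ≤ (m:ℤ) * d := mul_nonneg (Int.natCast_nonneg m) hd.le
        have hwm : w + (m:ℤ) * d ∈ S := by
          rw [hmem]
          constructor
          · linarith
          · nlinarith [hb2.2]
        have hwm1 : w + (m:ℤ) * d + d ∈ S := by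
          rw [hmem]
          constructor
          · nlinarith [hb2.1]
          · nlinarith [hb2.2]
        have h1 := ih w hw hwm
        have h2 := hstep (w + (m:ℤ) * d) hwm hwm1
        rw [h1, h2]
        congr 1
        exact Subtype.ext (by push_cast; ring)
    -- full periodicity on classes
    have hLem1 : ∀ (u v : ℤ) (hu : u ∈ S) (hv : v ∈ S), d ∣ (v - u) → p ⟨u, hu⟩ = p ⟨v, hv⟩ := by
      have key : ∀ (u v : ℤ) (hu : u ∈ S) (hv : v ∈ S), u ≤ v → d ∣ (v - u) →
          p ⟨u, hu⟩ = p ⟨v, hv⟩ := by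
        intro u v hu hv hle hdvd
        obtain ⟨k, hk⟩ := hdvd
        have hk0 : 0 ≤ k := by nlinarith
        obtain ⟨n, rfl⟩ := Int.eq_ofNat_of_zero_le hk0
        have hv' : v = u + (n:ℤ) * d := by rw [mul_comm] at hk; omega
        have := hchain n u hu (by rw [← hv']; exact hv)
        rw [this]
        congr 1
        exact Subtype.ext hv'.symm
      intro u v hu hv hdvd
      rcases le_total u v with h | h
      · exact key u v hu hv h hdvd
      · refine (key v u hv hu h ?_).symm
        have := hdvd.neg_right
        rwa [neg_sub] at this
    have hne : p ⟨t1, ht1⟩ ≠ p ⟨0, h0⟩ := hT2 t1 ht1 hp1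
    -- the interval [L, R]
    set L : ℤ := max a (a + t1) with hLdef
    set R : ℤ := min b (b + t2) with hRdef
    have hLa : a ≤ L := le_max_left _ _
    have hLt1 : a + t1 ≤ L := le_max_right _ _
    have hRb : R ≤ b := min_le_left _ _
    have hRt2 : R ≤ b + t2 := min_le_right _ _
    have hLmax : L = a ∨ L = a + t1 := by omega
    have hRmin : R = b ∨ R = b + t2 := by omega
    have hlen : L + d ≤ R + 1 := by omega
    -- the predicate Q
    set Q : ℤ → Prop := fun k => ∀ (s : ℤ) (hs : s ∈ S), d ∣ (s - k * t1) → p ⟨s, hs⟩ = p ⟨0, h0⟩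
      with hQdef
    have hQbase : Q d := by
      intro s hs hdvd
      have hds : d ∣ s := by
        have h1 : d ∣ d * t1 := dvd_mul_right d t1
        have := dvd_add hdvd h1
        rwa [sub_add_cancel] at this
      refine hLem1 s 0 hs h0 ?_
      rw [zero_sub]
      exact hds.neg_right
    have hQstep : ∀ k : ℤ, Q k → Q (k - 1) := by
      intro k hQk s hs hdvds
      -- pick representative s' of class k*t1 in [L,R]
      set s' : ℤ := L + (k * t1 - L) % d with hs'def
      have hmod1 : 0 ≤ (k * t1 - L) % d := Int.emod_nonneg _ (ne_of_gt hd)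
      have hmod2 : (k * t1 - L) % d < d := Int.emod_lt_of_pos _ hd
      have hdvd' : d ∣ s' - k * t1 := by
        refine ⟨-((k * t1 - L) / d), ?_⟩
        have := Int.emod_def (k * t1 - L) d
        rw [hs'def]
        rw [this]
        ring
      have hs'S : s' ∈ S := by rw [hmem]; omega
      have hcase : (s' - t1 ∈ S) ∨ (s' - t2 ∈ S) := by
        rw [hmem, hmem]; omega
      obtain ⟨t, hqt, huS, hudvd⟩ :
          ∃ t : ℤ, q t = p ∧ s' - t ∈ S ∧ d ∣ (s' - t - (k - 1) * t1) := by
        rcases hcase with h | h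
        · refine ⟨t1, hp1, h, ?_⟩
          have : s' - t1 - (k - 1) * t1 = s' - k * t1 := by ring
          rw [this]; exact hdvd'
        · refine ⟨t2, hp2, h, ?_⟩
          have : s' - t2 - (k - 1) * t1 = (s' - k * t1) - d := by rw [hddef]; ring
          rw [this]
          exact dvd_sub hdvd' dvd_rfl
      have hxu : x s' = p ⟨s' - t, huS⟩ := by
        have := htrans t hqt (s' - t) huS
        rwa [sub_add_cancel] at this
      have hu0 : p ⟨s' - t, huS⟩ = p ⟨0, h0⟩ := by
        rcases hD s' hs'S with hqp | hxs
        · rw [← hxu, hT1 s' hqp]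
        · rw [← hxu, hxs]
          exact hQk s' hs'S hdvd'
      have hfin : p ⟨s, hs⟩ = p ⟨s' - t, huS⟩ := by
        refine hLem1 s (s' - t) hs huS ?_
        have h1 := dvd_sub hudvd hdvds
        have e : s' - t - (k - 1) * t1 - (s - (k - 1) * t1) = s' - t - s := by ring
        rw [e] at h1
        exact h1
      rw [hfin, hu0]
    -- descend
    have hQdesc : ∀ n : ℕ, Q (d - n) := by
      intro n
      induction n with
      | zero => simpa using hQbase
      | succ m ih =>
        have h := hQstep (d - m) ih
        have e : d - ((m:ℤ) + 1) = d - (m:ℤ) - 1 := by ring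
        push_cast
        rw [e]
        exact h
    have hQ1 : Q 1 := by
      have h := hQdesc (d - 1).toNat
      have e : ((d - 1).toNat : ℤ) = d - 1 := by omega
      rw [e] at h
      have e2 : d - (d - 1) = 1 := by ring
      rwa [e2] at h
    exact hne (hQ1 t1 ht1 (by rw [one_mul, sub_self]; exact dvd_zero d))
  -- assemble
  obtain ⟨t, ht, htne, hqt⟩ := hex
  refine ⟨t, ⟨ht, htne, hqt⟩, ?_⟩
  rintro y ⟨hy, hyne, hqy⟩
  rcases lt_trichotomy y t with h | h | h
  · exact absurd (huniq y t hy ht hqy hqt h) (fun f => f)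
  · exact h
  · exact absurd (huniq t y ht hy hqt hqy h) (fun f => f)
end

section
/- Let S ⊂ ℤ be a finite integer interval with 0 ∈ S, and let τ : A^ℤ → A^ℤ be a cellular automaton with a unique active transition p ∈ A^S. If τ ∘ τ ≠ τ, then there exists x ∈ A^ℤ such that τ^n(x) ≠ τ^m(x) for all positive integers n ≠ m. -/
lemma ca_betw (a b e : ℤ) (j k : ℕ) (r : ℤ) (hjk : j ≤ k)
    (h1 : a ≤ r) (h2 : r ≤ b) (h3 : a ≤ r + (k : ℤ) * e) (h4 : r + (k : ℤ) * e ≤ b) :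
    a ≤ r + (j : ℤ) * e ∧ r + (j : ℤ) * e ≤ b := by
  have hj : (0:ℤ) ≤ (j:ℤ) := Int.natCast_nonneg j
  have hjk' : (j:ℤ) ≤ (k:ℤ) := by exact_mod_cast hjk
  rcases le_or_gt 0 e with h | h
  · have h5 : (j:ℤ) * e ≤ (k:ℤ) * e := mul_le_mul_of_nonneg_right hjk' h
    have h6 : 0 ≤ (j:ℤ) * e := mul_nonneg hj h
    constructor <;> linarith
  · have h5 : (k:ℤ) * e ≤ (j:ℤ) * e := by nlinarith
    have h6 : (j:ℤ) * e ≤ 0 := by nlinarith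
    constructor <;> linarith

lemma ca_chain {A : Type*} (P : ℤ → A) (a b e : ℤ) (Q : ℤ → Prop)
    (hstep : ∀ s, Q s → a ≤ s → s ≤ b → a ≤ s + e → s + e ≤ b → P (s + e) = P s) :
    ∀ (k : ℕ) (r : ℤ), (∀ j : ℕ, j < k → Q (r + (j:ℤ) * e)) → a ≤ r → r ≤ b →
      a ≤ r + (k:ℤ) * e → r + (k:ℤ) * e ≤ b → P (r + (k:ℤ) * e) = P r := by
  intro k
  induction k with
  | zero => intro r _ _ _ _ _; norm_num
  | succ n ih =>
    intro r hQ h1 h2 h3 h4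
    have hb1 := ca_betw a b e n (n+1) r (Nat.le_succ n) h1 h2 h3 h4
    have he1 : r + ((n+1 : ℕ) : ℤ) * e = (r + (n:ℤ) * e) + e := by push_cast; ring
    rw [he1]
    have := hstep (r + (n:ℤ) * e) (hQ n (Nat.lt_succ_self n)) hb1.1 hb1.2
      (by rw [← he1]; exact h3) (by rw [← he1]; exact h4)
    rw [this]
    exact ih r (fun j hj => hQ j (Nat.lt_succ_of_lt hj)) h1 h2 hb1.1 hb1.2


/-- Let `S` be a finite integer interval with `0 ∈ S` and let `τ`
be the CA with unique active transition `p : S → A`. If `τ` is not idempotent, then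
there exists `x ∈ A^ℤ` whose iterates `τⁿ(x)` are pairwise distinct for positive
`n`. -/
theorem not_idempotent_implies_infinite_orbit
    {A : Type*} [Nontrivial A]
    (a b : ℤ) (S : Finset ℤ) (hS : S = Finset.Icc a b) (h0 : (0 : ℤ) ∈ S)
    (p : S → A) (μ : (S → A) → A)
    (hμ : ∀ z : S → A, μ z = z ⟨0, h0⟩ ↔ z ≠ p)
    (τ : (ℤ → A) → ℤ → A)
    (hτ : ∀ (x : ℤ → A) (j : ℤ), τ x j = μ (fun s : S => x (s.1 + j)))
    (hnotidem : τ ∘ τ ≠ τ) :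
    ∃ x : ℤ → A, ∀ n m : ℕ, 0 < n → 0 < m → n ≠ m → τ^[n] x ≠ τ^[m] x := by
  classical
  have hmem : ∀ s : ℤ, s ∈ S ↔ a ≤ s ∧ s ≤ b := by
    intro s; rw [hS]; exact Finset.mem_Icc
  have ha : a ≤ 0 := ((hmem 0).1 h0).1
  have hb : (0:ℤ) ≤ b := ((hmem 0).1 h0).2
  set c : A := μ p with hcdef
  set P : ℤ → A := fun s => if h : s ∈ S then p ⟨s, h⟩ else p ⟨0, h0⟩ with hPdef
  have hP : ∀ (s : ℤ) (h : s ∈ S), P s = p ⟨s, h⟩ := fun s h => dif_pos h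
  have hP0 : P 0 = p ⟨0, h0⟩ := hP 0 h0
  have hc : c ≠ P 0 := by
    intro h
    exact ((hμ p).mp (by rw [hP0] at h; exact h)) rfl
  -- evaluation of τ
  have tau_act : ∀ (x : ℤ → A) (j : ℤ),
      (∀ s : ℤ, a ≤ s → s ≤ b → x (s + j) = P s) → τ x j = c := by
    intro x j hA
    rw [hτ]
    congr 1
    funext s
    have hs := (hmem s.1).1 s.2
    rw [hA s.1 hs.1 hs.2, hP s.1 s.2]
  have tau_inact : ∀ (x : ℤ → A) (j : ℤ),
      ¬ (∀ s : ℤ, a ≤ s → s ≤ b → x (s + j) = P s) → τ x j = x j := by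
    intro x j hA
    have hne : (fun s : S => x (s.1 + j)) ≠ p := by
      intro he
      apply hA
      intro s hs1 hs2
      have hsS : s ∈ S := (hmem s).2 ⟨hs1, hs2⟩
      have := congrFun he ⟨s, hsS⟩
      rw [hP s hsS]
      exact this
    have h2 := (hμ _).2 hne
    rw [hτ, h2]
    show x ((0:ℤ) + j) = x j
    rw [zero_add]
  have shift : ∀ (x : ℤ → A) (k : ℤ), τ (fun i => x (i + k)) = fun i => τ x (i + k) := by
    intro x k
    funext j
    rw [hτ, hτ]
    congr 1
    funext s
    show x (s.1 + j + k) = x (s.1 + (j + k))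
    rw [add_assoc]
  -- witness extraction
  obtain ⟨x1, hx1⟩ : ∃ x, τ (τ x) ≠ τ x := by
    by_contra h
    push_neg at h
    exact hnotidem (funext fun x => h x)
  obtain ⟨j1, hj1⟩ : ∃ j, τ (τ x1) j ≠ τ x1 j := by
    by_contra h
    push_neg at h
    exact hx1 (funext h)
  have hActy : ∀ s : ℤ, a ≤ s → s ≤ b → (τ x1) (s + j1) = P s := by
    by_contra h
    exact hj1 (tau_inact (τ x1) j1 h)
  set X : ℤ → A := fun i => x1 (i + j1) with hXdef
  have hwin : ∀ s : ℤ, a ≤ s → s ≤ b → τ X s = P s := by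
    intro s h1 h2
    have hXs : τ X = fun i => τ x1 (i + j1) := shift x1 j1
    rw [hXs]
    exact hActy s h1 h2
  -- basic facts about X
  have hnact0 : ¬ (∀ s : ℤ, a ≤ s → s ≤ b → X (s + 0) = P s) := by
    intro hA
    have h1 := tau_act X 0 hA
    have h2 := hwin 0 ha hb
    rw [h1] at h2
    exact hc h2
  have hX0 : X 0 = P 0 := by
    have h2 := tau_inact X 0 hnact0
    rw [← h2]
    exact hwin 0 ha hb
  -- the active transition value
  have actPc : ∀ t : ℤ, a ≤ t → t ≤ b → (∀ s : ℤ, a ≤ s → s ≤ b → X (s + t) = P s) →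
      P t = c := by
    intro t h1 h2 hA
    have e1 := tau_act X t hA
    have e2 := hwin t h1 h2
    rw [e1] at e2
    exact e2.symm
  -- existence of an active site m ≠ 0 in [a,b]
  obtain ⟨m, hma, hmb, hm0, hActm⟩ :
      ∃ m : ℤ, a ≤ m ∧ m ≤ b ∧ m ≠ 0 ∧ (∀ s : ℤ, a ≤ s → s ≤ b → X (s + m) = P s) := by
    by_contra hno
    push_neg at hno
    apply hnact0
    intro s h1 h2
    rw [add_zero]
    by_contra hxs
    have hact_s : ∀ s' : ℤ, a ≤ s' → s' ≤ b → X (s' + s) = P s' := by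
      by_contra hnact
      have h3 := tau_inact X s hnact
      have h4 := hwin s h1 h2
      rw [h3] at h4
      exact hxs h4
    have hs0 : s ≠ 0 := by
      intro h
      subst h
      exact hxs hX0
    obtain ⟨s', hs1', hs2', hs3'⟩ := hno s h1 h2 hs0
    exact hs3' (hact_s s' hs1' hs2')
  -- uniqueness of the active site in [a,b]
  have uniq : ∀ t t' : ℤ, a ≤ t → t ≤ b → a ≤ t' → t' ≤ b →
      (∀ s : ℤ, a ≤ s → s ≤ b → X (s + t) = P s) →
      (∀ s : ℤ, a ≤ s → s ≤ b → X (s + t') = P s) → t = t' := by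
    intro t t' h1 h2 h3 h4 hAt hAt'
    by_contra hne
    have hex : ∃ d : ℕ, 0 < d ∧ ∃ u v : ℤ, a ≤ u ∧ u ≤ b ∧ a ≤ v ∧ v ≤ b ∧
        (∀ s : ℤ, a ≤ s → s ≤ b → X (s + u) = P s) ∧
        (∀ s : ℤ, a ≤ s → s ≤ b → X (s + v) = P s) ∧ v - u = (d : ℤ) := by
      rcases lt_or_gt_of_ne hne with h | h
      · exact ⟨(t' - t).toNat, by omega, t, t', h1, h2, h3, h4, hAt, hAt', by omega⟩
      · exact ⟨(t - t').toNat, by omega, t', t, h3, h4, h1, h2, hAt', hAt, by omega⟩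
    obtain ⟨hspos, m₁, m₂, ha1, hb1, ha2, hb2, hA1, hA2, hdiff⟩ := Nat.find_spec hex
    set sn : ℕ := Nat.find hex with hsdef
    set sZ : ℤ := (sn : ℤ) with hsZdef
    have hsZ : 0 < sZ := by rw [hsZdef]; exact_mod_cast hspos
    have hsle : sZ ≤ b - a := by omega
    -- periodicity of P with period sZ
    have per : ∀ r, a ≤ r → r ≤ b → a ≤ r + sZ → r + sZ ≤ b → P (r + sZ) = P r := by
      intro r hr1 hr2 hr3 hr4
      have e1 : X ((r + sZ) + m₁) = P (r + sZ) := hA1 (r + sZ) hr3 hr4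
      have e2 : X (r + m₂) = P r := hA2 r hr1 hr2
      have e3 : (r + sZ) + m₁ = r + m₂ := by omega
      rw [e3, e2] at e1
      exact e1.symm
    have perChain : ∀ (k : ℕ) (r : ℤ), a ≤ r → r ≤ b → a ≤ r + (k:ℤ) * sZ →
        r + (k:ℤ) * sZ ≤ b → P (r + (k:ℤ) * sZ) = P r := by
      intro k r
      exact ca_chain P a b sZ (fun _ => True)
        (fun s _ hs1 hs2 hs3 hs4 => per s hs1 hs2 hs3 hs4) k r (fun _ _ => trivial)
    set ψ : ℤ → A := fun q => P (a + (q - a) % sZ) with hψdef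
    have hmod1 : ∀ q : ℤ, 0 ≤ (q - a) % sZ := fun q => Int.emod_nonneg _ (by omega)
    have hmod2 : ∀ q : ℤ, (q - a) % sZ < sZ := fun q => Int.emod_lt_of_pos _ hsZ
    have ψ_eq : ∀ r, a ≤ r → r ≤ b → ψ r = P r := by
      intro r hr1 hr2
      have hq1 := hmod1 r
      have hq2 := hmod2 r
      have hdm := Int.mul_ediv_add_emod (r - a) sZ
      have hknn : 0 ≤ (r - a) / sZ := Int.ediv_nonneg (by omega) hsZ.le
      obtain ⟨k, hkk⟩ : ∃ k : ℕ, ((r - a) / sZ) = (k : ℤ) :=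
        ⟨((r - a) / sZ).toNat, (Int.toNat_of_nonneg hknn).symm⟩
      have hr : r = (a + (r - a) % sZ) + (k:ℤ) * sZ := by
        rw [← hkk]; linarith [mul_comm sZ ((r - a) / sZ)]
      have h5 := perChain k (a + (r - a) % sZ) (by omega) (by omega)
        (by rw [← hr]; exact hr1) (by rw [← hr]; exact hr2)
      show P (a + (r - a) % sZ) = P r
      rw [← h5, ← hr]
    have ψ_mod : ∀ q q' : ℤ, sZ ∣ (q - q') → ψ q = ψ q' := by
      intro q q' hd
      obtain ⟨k, hk⟩ := hd
      show P (a + (q - a) % sZ) = P (a + (q' - a) % sZ)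
      have he : q - a = (q' - a) + sZ * k := by linarith
      rw [he, Int.add_mul_emod_self_left]
    -- all sites strictly between m₁ and m₂ are inactive, giving a shift relation for ψ
    have rel : ∀ q : ℤ, 0 < q → q < sZ → ψ (m₁ + q) = ψ q := by
      intro q hq1 hq2
      have hr1 : a ≤ m₁ + q := by omega
      have hr2 : m₁ + q ≤ b := by omega
      have hnotact : ¬ (∀ s : ℤ, a ≤ s → s ≤ b → X (s + (m₁ + q)) = P s) := by
        intro hAr
        have : ¬ ∃ u v : ℤ, a ≤ u ∧ u ≤ b ∧ a ≤ v ∧ v ≤ b ∧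
            (∀ s : ℤ, a ≤ s → s ≤ b → X (s + u) = P s) ∧
            (∀ s : ℤ, a ≤ s → s ≤ b → X (s + v) = P s) ∧ v - u = ((q.toNat : ℕ) : ℤ) := by
          intro hcon
          exact (Nat.find_min hex (show q.toNat < sn by omega)) ⟨by omega, hcon⟩
        exact this ⟨m₁, m₁ + q, ha1, hb1, hr1, hr2, hA1, hAr, by omega⟩
      have hXr : X (m₁ + q) = P (m₁ + q) := by
        have h3 := tau_inact X (m₁ + q) hnotact
        have h4 := hwin (m₁ + q) hr1 hr2
        rw [h3] at h4
        exact h4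
      rcases le_or_gt q b with hqb | hqb
      · -- use window at m₁, offset q
        have e1 : X (q + m₁) = P q := hA1 q (by omega) hqb
        have e2 : q + m₁ = m₁ + q := by ring
        rw [e2, hXr] at e1
        rw [ψ_eq (m₁ + q) hr1 hr2, ψ_eq q (by omega) hqb]
        exact e1
      · -- use window at m₂, offset q - sZ
        have e1 : X ((q - sZ) + m₂) = P (q - sZ) := hA2 (q - sZ) (by omega) (by omega)
        have e2 : (q - sZ) + m₂ = m₁ + q := by omega
        rw [e2, hXr] at e1
        rw [ψ_eq (m₁ + q) hr1 hr2, e1, ← ψ_eq (q - sZ) (by omega) (by omega)]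
        exact ψ_mod (q - sZ) q ⟨-1, by ring⟩
    have rel' : ∀ q : ℤ, ¬ sZ ∣ q → ψ (m₁ + q) = ψ q := by
      intro q hq
      have h1' : 0 ≤ q % sZ := Int.emod_nonneg q (by omega)
      have h2' : q % sZ < sZ := Int.emod_lt_of_pos q hsZ
      have h3' : q % sZ ≠ 0 := fun h => hq (Int.dvd_of_emod_eq_zero h)
      have h4' : sZ ∣ (q - q % sZ) := Int.dvd_self_sub_of_emod_eq rfl
      have e1 : ψ (m₁ + q) = ψ (m₁ + q % sZ) := ψ_mod _ _ (by
        have : m₁ + q - (m₁ + q % sZ) = q - q % sZ := by ring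
        rw [this]; exact h4')
      have e2 : ψ (m₁ + q % sZ) = ψ (q % sZ) := rel (q % sZ) (by omega) h2'
      have e3 : ψ (q % sZ) = ψ q := ψ_mod _ _ (by
        have : q % sZ - q = -(q - q % sZ) := by ring
        rw [this]; exact dvd_neg.2 h4')
      rw [e1, e2, e3]
    have hPm1c : P m₁ = c := actPc m₁ ha1 hb1 hA1
    have hexn : ∃ k : ℕ, 0 < k ∧ sZ ∣ (k : ℤ) * m₁ := ⟨sn, hspos, ⟨m₁, by rw [hsZdef]⟩⟩
    obtain ⟨hn0, hndvd⟩ := Nat.find_spec hexn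
    set n : ℕ := Nat.find hexn with hndef
    have hchain : ∀ k : ℕ, 1 ≤ k → k ≤ n → ψ ((k:ℤ) * m₁) = c := by
      intro k
      induction k with
      | zero => omega
      | succ l ih =>
        intro _ hkn
        rcases Nat.eq_zero_or_pos l with hl | hl
        · subst hl
          show ψ ((0 + 1 : ℕ) * m₁) = c
          push_cast
          rw [one_mul]
          rw [ψ_eq m₁ ha1 hb1]
          exact hPm1c
        · have hnd : ¬ sZ ∣ (l:ℤ) * m₁ := by
            intro hd
            exact (Nat.find_min hexn (show l < n by omega)) ⟨hl, hd⟩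
          have e0 : ((l+1 : ℕ) : ℤ) * m₁ = m₁ + (l:ℤ) * m₁ := by push_cast; ring
          rw [show (((l+1 : ℕ) : ℤ)) = ((l:ℤ) + 1) by push_cast; ring] at *
          calc ψ (((l:ℤ)+1) * m₁) = ψ (m₁ + (l:ℤ) * m₁) := by ring_nf
            _ = ψ ((l:ℤ) * m₁) := rel' _ hnd
            _ = c := ih hl (by omega)
    have hfin : ψ ((n:ℤ) * m₁) = c := hchain n (by omega) le_rfl
    have hfin2 : ψ ((n:ℤ) * m₁) = ψ 0 := ψ_mod _ _ (by rw [sub_zero]; exact hndvd)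
    rw [hfin2, ψ_eq 0 ha hb] at hfin
    exact hc hfin.symm
  -- p takes value c at the active site m
  have hPmc : P m = c := actPc m hma hmb hActm
  -- the key overlap property of p
  have P1 : ∀ s : ℤ, s ≠ 0 → a ≤ s → s ≤ b → a ≤ s + m → s + m ≤ b → P (s + m) = P s := by
    intro s hs0 h1 h2 h3 h4
    have e1 : X (s + m) = P s := hActm s h1 h2
    have hnot : ¬ (∀ s' : ℤ, a ≤ s' → s' ≤ b → X (s' + (s + m)) = P s') := by
      intro hA
      exact hs0 (by have := uniq (s + m) m h3 h4 hma hmb hA hActm; omega)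
    have h5 := tau_inact X (s + m) hnot
    have h6 := hwin (s + m) h3 h4
    rw [h5] at h6
    rw [← h6]
    exact e1
  -- chain consequences
  have Ppos : ∀ k : ℕ, a ≤ m + (k:ℤ) * m → m + (k:ℤ) * m ≤ b → P (m + (k:ℤ) * m) = c := by
    intro k hk1 hk2
    have hch := ca_chain P a b m (fun s => s ≠ 0)
      (fun s hs hh1 hh2 hh3 hh4 => P1 s hs hh1 hh2 hh3 hh4) k m
      (fun j _ => by
        have hj : m + (j:ℤ) * m = ((j:ℤ) + 1) * m := by ring
        rw [hj]
        exact mul_ne_zero (by positivity) hm0) hma hmb hk1 hk2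
    rw [hch, hPmc]
  have Pneg : ∀ k : ℕ, a ≤ -(k:ℤ) * m → -(k:ℤ) * m ≤ b → P (-(k:ℤ) * m) = P 0 := by
    intro k hk1 hk2
    have hz : -(k:ℤ) * m + (k:ℤ) * m = 0 := by ring
    have hch := ca_chain P a b m (fun s => s ≠ 0)
      (fun s hs hh1 hh2 hh3 hh4 => P1 s hs hh1 hh2 hh3 hh4) k (-(k:ℤ) * m)
      (fun j hj => by
        have hj2 : -(k:ℤ) * m + (j:ℤ) * m = ((j:ℤ) - (k:ℤ)) * m := by ring
        rw [hj2]
        refine mul_ne_zero ?_ hm0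
        have : (j:ℤ) < (k:ℤ) := by exact_mod_cast hj
        omega) hk1 hk2 (by rw [hz]; exact ha) (by rw [hz]; exact hb)
    rw [hz] at hch
    rw [← hch]
  have Pclass : ∀ (k : ℕ) (r : ℤ), ¬ m ∣ r → a ≤ r → r ≤ b → a ≤ r + (k:ℤ) * m →
      r + (k:ℤ) * m ≤ b → P (r + (k:ℤ) * m) = P r := by
    intro k r hr h1 h2 h3 h4
    refine ca_chain P a b m (fun s => s ≠ 0)
      (fun s hs hh1 hh2 hh3 hh4 => P1 s hs hh1 hh2 hh3 hh4) k r
      (fun j _ => by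
        intro hz
        exact hr ⟨-(j:ℤ), by linarith⟩) h1 h2 h3 h4
  -- the spaceship configuration
  have hM1 : 0 < |m| := abs_pos.2 hm0
  have hMb : |m| ≤ b - a := by rcases abs_cases m with ⟨h, _⟩ | ⟨h, _⟩ <;> omega
  set u : ℤ → A :=
    fun i => if m ∣ i then (if 1 ≤ i / m then c else P 0) else P (a + (i - a) % |m|)
    with hudef
  have hmodu1 : ∀ i : ℤ, 0 ≤ (i - a) % |m| := fun i => Int.emod_nonneg _ (by omega)
  have hmodu2 : ∀ i : ℤ, (i - a) % |m| < |m| := fun i => Int.emod_lt_of_pos _ hM1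
  have uQ : ∀ i : ℤ, i ≠ 0 → u (i + m) = u i := by
    intro i hi
    by_cases hd : m ∣ i
    · have hd2 : m ∣ i + m := dvd_add hd dvd_rfl
      have hdiv : (i + m) / m = i / m + 1 := by
        have := Int.add_mul_ediv_right i 1 hm0
        rwa [one_mul] at this
      have hk0 : i / m ≠ 0 := by
        intro h
        apply hi
        have h2 := Int.ediv_mul_cancel hd
        rw [h, zero_mul] at h2
        exact h2.symm
      simp only [hudef]
      rw [if_pos hd2, if_pos hd, hdiv]
      by_cases h1 : 1 ≤ i / m
      · rw [if_pos h1, if_pos (by omega)]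
      · rw [if_neg h1, if_neg (by omega)]
    · have hd2 : ¬ m ∣ i + m := by
        intro h
        have h2 := dvd_sub h (dvd_refl m)
        have h3 : i + m - m = i := by ring
        rw [h3] at h2
        exact hd h2
      simp only [hudef]
      rw [if_neg hd2, if_neg hd]
      congr 2
      rcases abs_cases m with ⟨habs, _⟩ | ⟨habs, _⟩
      · have he : i + m - a = (i - a) + |m| * 1 := by rw [habs]; ring
        rw [he, Int.add_mul_emod_self_left]
      · have he : i + m - a = (i - a) + |m| * (-1) := by rw [habs]; ring
        rw [he, Int.add_mul_emod_self_left]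
  have uP : ∀ i : ℤ, a ≤ i → i ≤ b → u i = P i := by
    intro i h1 h2
    by_cases hd : m ∣ i
    · obtain ⟨k, hk⟩ := hd
      have hdiv : i / m = k := by rw [hk]; exact Int.mul_ediv_cancel_left k hm0
      simp only [hudef]
      rw [if_pos ⟨k, hk⟩, hdiv]
      rcases le_or_gt 1 k with hk1 | hk1
      · rw [if_pos hk1]
        have he : i = m + (((k - 1).toNat : ℕ) : ℤ) * m := by
          rw [Int.toNat_of_nonneg (by omega : (0:ℤ) ≤ k - 1), hk]; ring
        rw [he] at h1 h2 ⊢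
        exact (Ppos (k - 1).toNat h1 h2).symm
      · rw [if_neg (by omega)]
        have he : i = -(((-k).toNat : ℕ) : ℤ) * m := by
          rw [Int.toNat_of_nonneg (by omega : (0:ℤ) ≤ -k), hk]; ring
        rw [he] at h1 h2 ⊢
        exact (Pneg (-k).toNat h1 h2).symm
    · simp only [hudef]
      rw [if_neg hd]
      set r : ℤ := a + (i - a) % |m| with hrdef
      have hr1 : a ≤ r := by have := hmodu1 i; omega
      have hr2 : r ≤ b := by have := hmodu2 i; omega
      have hdvd : m ∣ i - r := by
        have h3 : |m| ∣ (i - a) - (i - a) % |m| := Int.dvd_self_sub_of_emod_eq rfl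
        have h4 : i - r = (i - a) - (i - a) % |m| := by rw [hrdef]; ring
        rw [h4]
        exact (abs_dvd m _).1 h3
      have hrnd : ¬ m ∣ r := by
        intro h
        apply hd
        have := dvd_add hdvd h
        simpa using this
      obtain ⟨k, hk⟩ := hdvd
      rcases le_or_gt 0 k with hksgn | hksgn
      · have he : i = r + ((k.toNat : ℕ) : ℤ) * m := by
          rw [Int.toNat_of_nonneg hksgn]; linarith [mul_comm m k]
        rw [he] at h1 h2 ⊢
        exact (Pclass k.toNat r hrnd hr1 hr2 h1 h2).symm
      · have he : r = i + (((-k).toNat : ℕ) : ℤ) * m := by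
          rw [Int.toNat_of_nonneg (by omega : (0:ℤ) ≤ -k)]; linarith [mul_comm m k]
        have hcl := Pclass (-k).toNat i hd h1 h2 (by rw [← he]; exact hr1)
          (by rw [← he]; exact hr2)
        rw [← he] at hcl
        exact hcl
  have u0 : u 0 = P 0 := by
    simp only [hudef]
    rw [if_pos (dvd_zero m), Int.zero_ediv, if_neg (by omega)]
  have uc : ∀ k : ℕ, 1 ≤ k → u ((k:ℤ) * m) = c := by
    intro k hk
    simp only [hudef]
    rw [if_pos (dvd_mul_left m (k:ℤ)), Int.mul_ediv_cancel _ hm0,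
      if_pos (by exact_mod_cast hk)]
  have um : u m = c := by
    have := uc 1 le_rfl
    rwa [Nat.cast_one, one_mul] at this
  -- u is a spaceship
  have ship : ∀ j : ℤ, τ u j = u (j + m) := by
    intro j
    by_cases hj : j = 0
    · subst hj
      have hact : ∀ s : ℤ, a ≤ s → s ≤ b → u (s + 0) = P s := by
        intro s h1 h2
        rw [add_zero]
        exact uP s h1 h2
      rw [tau_act u 0 hact, zero_add, um]
    · have hnact : ¬ ∀ s : ℤ, a ≤ s → s ≤ b → u (s + j) = P s := by
        intro hA
        have e1 : u j = P 0 := by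
          have := hA 0 ha hb
          rwa [zero_add] at this
        have e2 : u (m + j) = P m := hA m hma hmb
        rw [add_comm m j, uQ j hj, e1, hPmc] at e2
        exact hc e2.symm
      rw [tau_inact u j hnact]
      exact (uQ j hj).symm
  -- iterates are shifts
  have iter : ∀ n : ℕ, τ^[n] u = fun i => u (i + (n:ℤ) * m) := by
    intro n
    induction n with
    | zero => funext i; simp
    | succ l ih =>
      rw [Function.iterate_succ_apply', ih, shift u ((l:ℤ) * m)]
      funext i
      rw [ship (i + (l:ℤ) * m)]
      congr 1
      push_cast
      ring
  -- conclusion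
  refine ⟨u, ?_⟩
  have key : ∀ n n' : ℕ, n < n' → τ^[n] u ≠ τ^[n'] u := by
    intro n n' hlt heq
    rw [iter n, iter n'] at heq
    have h1 : u (-(n:ℤ) * m + (n:ℤ) * m) = u (-(n:ℤ) * m + (n':ℤ) * m) :=
      congrFun heq (-(n:ℤ) * m)
    have e1 : -(n:ℤ) * m + (n:ℤ) * m = 0 := by ring
    have e2 : -(n:ℤ) * m + (n':ℤ) * m = (((n' - n : ℕ) : ℕ) : ℤ) * m := by
      push_cast [Nat.cast_sub hlt.le]
      ring
    rw [e1, e2, u0, uc (n' - n) (by omega)] at h1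
    exact hc h1.symm
  intro n n' hn hn' hne
  rcases lt_or_gt_of_ne hne with h | h
  · exact key n n' h
  · exact fun heq => key n' n h heq.symm
end
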